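/- arXiv:2412.08924 — 5 statements merged into one kernel-verified Lean document; each statement's English description precedes it below -/
import Mathlib

section
/- Let V and V' be finitely generated free ℤ-modules, and let α : V → V' be an injective ℤ-linear map whose cokernel V'/α(V) is finite of cardinality d. Then the induced ℚ-linear map α_ℚ : ℚ ⊗_ℤ V → ℚ ⊗_ℤ V' is bijective, and for every ℤ-linear endomorphism e' of V', the ℚ-linear endomorphism e := α_ℚ⁻¹ ∘ (e' ⊗ ℚ) ∘ α_ℚ of ℚ ⊗_ℤ V satisfies: (i) for every v ∈ V, the element d • e(1 ⊗ v) lies in the image of the canonical map V → ℚ ⊗_ℤ V; and (ii) if e' ∘ e' = e', then e ∘ e = e. -/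
/-!
Since `d` kills the cokernel, `d • V' ⊆ α(V)`. Tensoring with the flat `ℤ`-module `ℚ` keeps
`α` injective, and `q ⊗ y = (q / d) ⊗ (d • y)` shows that it becomes surjective. For `v ∈ V`,
`d • α_ℚ (e (1 ⊗ v)) = 1 ⊗ d • e' (α v) = α_ℚ (1 ⊗ w)` with `α w = d • e' (α v)`, so
injectivity of `α_ℚ` gives `d • e (1 ⊗ v) = 1 ⊗ w`. Idempotence transfers along the injective
map `α_ℚ` intertwining `e` with `e'_ℚ`.
-/

open scoped TensorProduct

theorem Submodule.card_quotient_nsmul_mem {R M : Type*} [Ring R] [AddCommGroup M] [Module R M]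
    (N : Submodule R M) (x : M) : Nat.card (M ⧸ N) • x ∈ N := by
  rw [← Submodule.Quotient.mk_eq_zero, Submodule.Quotient.mk_smul]
  exact card_nsmul_eq_zero'

theorem LinearMap.comp_self_eq_of_comp_eq_of_injective {R M N : Type*} [Semiring R]
    [AddCommMonoid M] [Module R M] [AddCommMonoid N] [Module R N]
    {g : M →ₗ[R] N} (hg : Function.Injective g) {e : M →ₗ[R] M} {e' : N →ₗ[R] N}
    (h : g ∘ₗ e = e' ∘ₗ g) (he' : e' ∘ₗ e' = e') : e ∘ₗ e = e := by
  have hsemi (x : M) : g (e x) = e' (g x) := LinearMap.congr_fun h x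
  refine LinearMap.ext fun x => hg ?_
  calc g (e (e x)) = e' (e' (g x)) := by rw [hsemi, hsemi]
    _ = g (e x) := by rw [← LinearMap.comp_apply (f := e'), he', hsemi]

section BaseChange

variable {K M N : Type*} [AddCommGroup M] [Module ℤ M] [AddCommGroup N] [Module ℤ N]

theorem LinearMap.baseChange_injective_of_injective [Field K] [CharZero K]
    {f : M →ₗ[ℤ] N} (hf : Function.Injective f) : Function.Injective (f.baseChange K) := by
  rw [f.baseChange_eq_ltensor]
  exact Module.Flat.lTensor_preserves_injective_linearMap f hf

theorem LinearMap.baseChange_surjective_of_nsmul_mem_range [Field K] [CharZero K]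
    {f : M →ₗ[ℤ] N} {n : ℕ} (hn : n ≠ 0)
    (h : ∀ y, n • y ∈ LinearMap.range f) : Function.Surjective (f.baseChange K) := by
  rw [← LinearMap.range_eq_top, eq_top_iff]
  rintro x -
  induction x using TensorProduct.induction_on with
  | zero => exact zero_mem _
  | tmul q y =>
    obtain ⟨w, hw⟩ := h y
    refine ⟨(q / n) ⊗ₜ w, ?_⟩
    rw [LinearMap.baseChange_tmul, hw, TensorProduct.tmul_smul, ← Nat.cast_smul_eq_nsmul K,
      TensorProduct.smul_tmul', smul_eq_mul, mul_div_cancel₀ q (Nat.cast_ne_zero.mpr hn)]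
  | add x y hx hy => exact add_mem hx hy

theorem LinearMap.nsmul_mem_range_tmul_of_baseChange_eq_tmul [Semiring K] [Algebra ℤ K]
    {f : M →ₗ[ℤ] N} (hf : Function.Injective (f.baseChange K)) {n : ℕ} (h : ∀ y, n • y ∈ LinearMap.range f)
    {x : K ⊗[ℤ] M} {y : N} (hx : f.baseChange K x = (1 : K) ⊗ₜ y) :
    n • x ∈ Set.range fun w : M => (1 : K) ⊗ₜ[ℤ] w := by
  obtain ⟨w, hw⟩ := h y
  refine ⟨w, hf ?_⟩
  rw [LinearMap.baseChange_tmul, hw, TensorProduct.tmul_smul, map_nsmul, hx]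

end BaseChange

theorem statement0_general (V V' : Type*)
    [AddCommGroup V] [Module ℤ V]
    [AddCommGroup V'] [Module ℤ V']
    (α : V →ₗ[ℤ] V') (hinj : Function.Injective α)
    (d : ℕ) (hfin : Finite (V' ⧸ LinearMap.range α))
    (hd : Nat.card (V' ⧸ LinearMap.range α) = d) :
    Function.Bijective (LinearMap.baseChange ℚ α) ∧
      ∀ (e' : V' →ₗ[ℤ] V') (e : ℚ ⊗[ℤ] V →ₗ[ℚ] ℚ ⊗[ℤ] V),
        (LinearMap.baseChange ℚ α) ∘ₗ e
            = (LinearMap.baseChange ℚ e') ∘ₗ (LinearMap.baseChange ℚ α) →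
        ((∀ v : V, (d : ℤ) • e ((1 : ℚ) ⊗ₜ[ℤ] v)
              ∈ Set.range (fun w : V => (1 : ℚ) ⊗ₜ[ℤ] w)) ∧
          (e' ∘ₗ e' = e' → e ∘ₗ e = e)) := by
  have hd0 : d ≠ 0 := hd ▸ Nat.card_pos.ne'
  have hsmul (y : V') : d • y ∈ LinearMap.range α :=
    hd ▸ (LinearMap.range α).card_quotient_nsmul_mem y
  have hinjQ := LinearMap.baseChange_injective_of_injective (K := ℚ) hinj
  refine ⟨⟨hinjQ, LinearMap.baseChange_surjective_of_nsmul_mem_range hd0 hsmul⟩,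
    fun e' e hcomm => ⟨fun v => ?_, fun hidem => ?_⟩⟩
  · rw [natCast_zsmul]
    refine LinearMap.nsmul_mem_range_tmul_of_baseChange_eq_tmul hinjQ hsmul (y := e' (α v)) ?_
    rw [← LinearMap.comp_apply, hcomm]
    simp only [LinearMap.comp_apply, LinearMap.baseChange_tmul]
  · exact LinearMap.comp_self_eq_of_comp_eq_of_injective hinjQ hcomm
      (by rw [← LinearMap.baseChange_comp, hidem])

/-- Let `V` and `V'` be finitely generated free `ℤ`-modules and `α : V → V'` an injective
`ℤ`-linear map whose cokernel is finite of cardinality `d`.  Then the induced `ℚ`-linear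
map `α_ℚ : ℚ ⊗[ℤ] V → ℚ ⊗[ℤ] V'` is bijective, and for every `ℤ`-linear endomorphism
`e'` of `V'`, the `ℚ`-linear endomorphism `e = α_ℚ⁻¹ ∘ e'_ℚ ∘ α_ℚ` (characterized by
`α_ℚ ∘ e = e'_ℚ ∘ α_ℚ`) satisfies: (i) `d • e (1 ⊗ v)` lies in the image of the canonical
map `V → ℚ ⊗[ℤ] V` for every `v ∈ V`; and (ii) if `e'` is idempotent then so is `e`. -/
theorem statement0 (V V' : Type*)
    [AddCommGroup V] [Module ℤ V] [Module.Free ℤ V] [Module.Finite ℤ V]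
    [AddCommGroup V'] [Module ℤ V'] [Module.Free ℤ V'] [Module.Finite ℤ V']
    (α : V →ₗ[ℤ] V') (hinj : Function.Injective α)
    (d : ℕ) (hfin : Finite (V' ⧸ LinearMap.range α))
    (hd : Nat.card (V' ⧸ LinearMap.range α) = d) :
    Function.Bijective (LinearMap.baseChange ℚ α) ∧
      ∀ (e' : V' →ₗ[ℤ] V') (e : ℚ ⊗[ℤ] V →ₗ[ℚ] ℚ ⊗[ℤ] V),
        (LinearMap.baseChange ℚ α) ∘ₗ e
            = (LinearMap.baseChange ℚ e') ∘ₗ (LinearMap.baseChange ℚ α) →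
        ((∀ v : V, (d : ℤ) • e ((1 : ℚ) ⊗ₜ[ℤ] v)
              ∈ Set.range (fun w : V => (1 : ℚ) ⊗ₜ[ℤ] w)) ∧
          (e' ∘ₗ e' = e' → e ∘ₗ e = e)) :=
  statement0_general V V' α hinj d hfin hd
end

section
/- Fix integers r ≥ s ≥ 1, set m = r + s, fix c₀ ∈ ℝ, and fix an integer ℓ with r+1 ≤ ℓ ≤ m. Suppose w, w' ∈ Y(c₀) satisfy: w_ℓ ≠ 0 and w'_ℓ ≠ 0; w_i·w_ℓ = w'_i·w'_ℓ for every 1 ≤ i ≤ s with i ≠ ℓ − r; and w_j = w'_j for every s+1 ≤ j ≤ m. Then w = w'. -/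
/-!
The coordinate `w_ℓ` is among the `w_j` with `j ≥ s + 1`, so `w_ℓ = w'_ℓ ≠ 0`, and dividing the
given products by it recovers every `w_i`, `i ≤ s`, except `w_{ℓ-r}`. In the quadric equation the
only term not yet known to agree is then `w_{ℓ-r} w_ℓ`, so it agrees too, and dividing by `w_ℓ`
once more recovers `w_{ℓ-r}`.
-/

/-- 1-based coordinates of a point of `ℝ^m`: `coord w i = w_i` for `1 ≤ i ≤ m`,
and `0` otherwise. -/
noncomputable def coord {m : ℕ} (w : Fin m → ℝ) (i : ℕ) : ℝ :=
  if h : 1 ≤ i ∧ i ≤ m then w ⟨i - 1, by omega⟩ else 0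

theorem Finset.apply_eq_of_sum_eq_of_eqOn_erase {ι M : Type*} [AddCancelCommMonoid M]
    [DecidableEq ι] {s : Finset ι} {f g : ι → M} {a : ι} (ha : a ∈ s)
    (hsum : ∑ i ∈ s, f i = ∑ i ∈ s, g i) (hfg : ∀ i ∈ s, i ≠ a → f i = g i) : f a = g a := by
  rw [← add_sum_erase s f ha, ← add_sum_erase s g ha,
    sum_congr rfl fun i hi => hfg i (mem_of_mem_erase hi) (ne_of_mem_erase hi)] at hsum
  exact add_right_cancel hsum

theorem eq_of_coord_eq {m : ℕ} {w w' : Fin m → ℝ}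
    (h : ∀ i, 1 ≤ i → i ≤ m → coord w i = coord w' i) : w = w' := by
  funext x
  simpa [coord] using h (x + 1) (by omega) (by omega)

theorem statement2_general (r s : ℕ) (hsr : s ≤ r)
    (m : ℕ) (hm : m = r + s)
    (c₀ : ℝ) (ℓ : ℕ) (hℓ1 : r + 1 ≤ ℓ) (hℓ2 : ℓ ≤ m)
    (w w' : Fin m → ℝ)
    (hw : ∑ i ∈ Finset.Icc 1 s, coord w i * coord w (r + i)
        + ∑ j ∈ Finset.Icc (s + 1) r, (coord w j) ^ 2 = c₀)
    (hw' : ∑ i ∈ Finset.Icc 1 s, coord w' i * coord w' (r + i)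
        + ∑ j ∈ Finset.Icc (s + 1) r, (coord w' j) ^ 2 = c₀)
    (hne' : coord w' ℓ ≠ 0)
    (hprod : ∀ i : ℕ, 1 ≤ i → i ≤ s → i ≠ ℓ - r →
      coord w i * coord w ℓ = coord w' i * coord w' ℓ)
    (htail : ∀ j : ℕ, s + 1 ≤ j → j ≤ m → coord w j = coord w' j) :
    w = w' := by
  subst hm
  have hℓ : coord w ℓ = coord w' ℓ := htail ℓ (by omega) hℓ2
  have hfront (i : ℕ) (h1 : 1 ≤ i) (h2 : i ≤ s) (hi : i ≠ ℓ - r) : coord w i = coord w' i :=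
    mul_right_cancel₀ hne' (hℓ ▸ hprod i h1 h2 hi)
  have hsquares : ∑ j ∈ Finset.Icc (s + 1) r, coord w j ^ 2
      = ∑ j ∈ Finset.Icc (s + 1) r, coord w' j ^ 2 :=
    Finset.sum_congr rfl fun j hj => by
      rw [Finset.mem_Icc] at hj
      rw [htail j hj.1 (by omega)]
  have hpivot : coord w (ℓ - r) * coord w ℓ = coord w' (ℓ - r) * coord w' ℓ := by
    have hmixed : ∑ i ∈ Finset.Icc 1 s, coord w i * coord w (r + i)
        = ∑ i ∈ Finset.Icc 1 s, coord w' i * coord w' (r + i) := by linarith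
    have h := Finset.apply_eq_of_sum_eq_of_eqOn_erase
      (Finset.mem_Icc.2 ⟨by omega, by omega⟩ : ℓ - r ∈ Finset.Icc 1 s) hmixed fun i hi hne => by
        rw [Finset.mem_Icc] at hi
        rw [hfront i hi.1 hi.2 hne, htail (r + i) (by omega) (by omega)]
    rwa [Nat.add_sub_cancel' (by omega : r ≤ ℓ)] at h
  refine eq_of_coord_eq fun i h1 h2 => ?_
  by_cases hi : i = ℓ - r
  · exact hi ▸ mul_right_cancel₀ hne' (hℓ ▸ hpivot)
  · by_cases his : i ≤ s
    · exact hfront i h1 his hi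
    · exact htail i (by omega) h2

/-- Fix `r ≥ s ≥ 1`, `m = r + s`, `c₀ ∈ ℝ`, and an index `ℓ` with `r + 1 ≤ ℓ ≤ m`.
If `w, w'` lie on the quadric `∑_{i=1}^{s} w_i w_{r+i} + ∑_{j=s+1}^{r} w_j² = c₀`,
both have `w_ℓ ≠ 0`, have equal products `w_i·w_ℓ` for all `1 ≤ i ≤ s` with
`i ≠ ℓ - r`, and equal coordinates `w_j` for `s + 1 ≤ j ≤ m`, then `w = w'`. -/
theorem statement2 (r s : ℕ) (hs : 1 ≤ s) (hsr : s ≤ r)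
    (m : ℕ) (hm : m = r + s)
    (c₀ : ℝ) (ℓ : ℕ) (hℓ1 : r + 1 ≤ ℓ) (hℓ2 : ℓ ≤ m)
    (w w' : Fin m → ℝ)
    (hw : ∑ i ∈ Finset.Icc 1 s, coord w i * coord w (r + i)
        + ∑ j ∈ Finset.Icc (s + 1) r, (coord w j) ^ 2 = c₀)
    (hw' : ∑ i ∈ Finset.Icc 1 s, coord w' i * coord w' (r + i)
        + ∑ j ∈ Finset.Icc (s + 1) r, (coord w' j) ^ 2 = c₀)
    (hne : coord w ℓ ≠ 0) (hne' : coord w' ℓ ≠ 0)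
    (hprod : ∀ i : ℕ, 1 ≤ i → i ≤ s → i ≠ ℓ - r →
      coord w i * coord w ℓ = coord w' i * coord w' ℓ)
    (htail : ∀ j : ℕ, s + 1 ≤ j → j ≤ m → coord w j = coord w' j) :
    w = w' :=
  statement2_general r s hsr m hm c₀ ℓ hℓ1 hℓ2 w w' hw hw' hne' hprod htail
end

section
/- Fix integers r ≥ s ≥ 1, set m = r + s, and fix c₀ ∈ ℝ and real constants κ, κ' > 0. Let W be the set of all w ∈ Y(c₀) such that: (a) |w_j| ≤ κ for every s+1 ≤ j ≤ m; (b) if some coordinate w_ℓ with r+1 ≤ ℓ ≤ m is nonzero and ℓ₀ is the least such index, then |w_i·w_{ℓ₀}| ≤ κ' for every 1 ≤ i ≤ s; and (c) if w_ℓ = 0 for every r+1 ≤ ℓ ≤ m, then |w_i| ≤ κ for every 1 ≤ i ≤ m. Then there exists a real constant ρ > 0 such that for every positive integer ν, the set {w ∈ W : ν·w ∈ ℤ^m} is finite of cardinality at most ρ·ν^{m+s−2}. -/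
/-!
Split the points according to the first nonzero coordinate `w_{r+i₀}` of the last block.
If it exists, `ν w_{r+i₀}` is a nonzero integer, so (b) gives `|ν w_i| ≤ κ' ν²` on the first
block and (a) gives `|ν w_j| ≤ κ ν` on the other `r` coordinates; moreover the quadric equation
is affine in `w_{i₀}` with coefficient `w_{r+i₀} ≠ 0`, so `w_{i₀}` is determined by the rest.
This leaves `s - 1` coordinates with `O(ν²)` and `r` with `O(ν)` values: `O(ν^{m+s-2})` points.
If the last block vanishes, (c) bounds every coordinate and `w_{r+1} = 0`: `O(ν^{m-1})` points.
-/

open Finset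

theorem card_Icc_neg_floor_le {B : ℝ} (hB : 0 ≤ B) :
    ((Icc (-⌊B⌋) ⌊B⌋).card : ℝ) ≤ 2 * B + 1 := by
  have hcard := Int.card_Icc_of_le (-⌊B⌋) ⌊B⌋ (by have := Int.floor_nonneg.mpr hB; omega)
  rw [← Int.cast_natCast, hcard]
  push_cast
  linarith [Int.floor_le B]

theorem finite_ncard_le_prod_of_determined {ι : Type*} [DecidableEq ι] (S : Set (ι → ℝ))
    {ν : ℝ} (hν : ν ≠ 0) (J : Finset ι) {B : ι → ℝ} (hB : ∀ i ∈ J, 0 ≤ B i)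
    (hint : ∀ w ∈ S, ∀ i ∈ J, ∃ z : ℤ, ν * w i = z)
    (hbd : ∀ w ∈ S, ∀ i ∈ J, |ν * w i| ≤ B i)
    (hdet : ∀ w ∈ S, ∀ w' ∈ S, (∀ i ∈ J, w i = w' i) → w = w') :
    S.Finite ∧ (S.ncard : ℝ) ≤ ∏ i ∈ J, (2 * B i + 1) := by
  set T := Fintype.piFinset fun i : J => Icc (-⌊B i⌋) ⌊B i⌋
  let F : (ι → ℝ) → J → ℤ := fun w i => ⌊ν * w i⌋
  have hfloor : ∀ w ∈ S, ∀ i ∈ J, (⌊ν * w i⌋ : ℝ) = ν * w i := by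
    intro w hw i hi
    obtain ⟨z, hz⟩ := hint w hw i hi
    rw [hz, Int.floor_intCast]
  have hmaps : Set.MapsTo F S T := by
    intro w hw
    simp only [T, Finset.mem_coe, Fintype.mem_piFinset, mem_Icc]
    intro i
    have h := abs_le.mp ((hfloor w hw i i.2).symm ▸ hbd w hw i i.2)
    constructor
    · rw [neg_le, Int.le_floor]
      push_cast
      linarith
    · rw [Int.le_floor]
      linarith
  have hinj : Set.InjOn F S := by
    intro w hw w' hw' hF
    refine hdet w hw w' hw' fun i hi => mul_left_cancel₀ hν ?_
    rw [← hfloor w hw i hi, ← hfloor w' hw' i hi]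
    exact congrArg Int.cast (congrFun hF ⟨i, hi⟩)
  refine ⟨Set.Finite.of_injOn hmaps hinj T.finite_toSet, ?_⟩
  calc (S.ncard : ℝ) ≤ T.card := by
        exact_mod_cast (Set.ncard_le_ncard_of_injOn F hmaps hinj T.finite_toSet).trans
          (Set.ncard_coe_finset T).le
    _ = ∏ i : J, ((Icc (-⌊B i⌋) ⌊B i⌋).card : ℝ) := by
        rw [Fintype.card_piFinset]
        push_cast
        rfl
    _ ≤ ∏ i : J, (2 * B i + 1) :=
        prod_le_prod (fun _ _ => by positivity) fun i _ => card_Icc_neg_floor_le (hB i i.2)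
    _ = ∏ i ∈ J, (2 * B i + 1) := prod_coe_sort J fun i => 2 * B i + 1

theorem prod_two_mul_mul_pow_add_one_le {ι : Type*} (J : Finset ι) {K x : ℝ} (hK : 0 ≤ K)
    (hx : 1 ≤ x) (e : ι → ℕ) :
    ∏ i ∈ J, (2 * (K * x ^ e i) + 1) ≤ (2 * K + 1) ^ J.card * x ^ ∑ i ∈ J, e i := by
  calc ∏ i ∈ J, (2 * (K * x ^ e i) + 1) ≤ ∏ i ∈ J, ((2 * K + 1) * x ^ e i) := by
        refine prod_le_prod (fun _ _ => by positivity) fun i _ => ?_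
        nlinarith [one_le_pow₀ (n := e i) hx]
    _ = (2 * K + 1) ^ J.card * x ^ ∑ i ∈ J, e i := by
        rw [prod_mul_distrib, prod_const, prod_pow_eq_pow_sum]

theorem finite_ncard_le_of_forall_abs_le_pow {ι : Type*} [DecidableEq ι] (S : Set (ι → ℝ))
    {ν : ℕ} (hν : 0 < ν) (J : Finset ι) {K : ℝ} (hK : 0 ≤ K) (e : ι → ℕ)
    (hint : ∀ w ∈ S, ∀ i ∈ J, ∃ z : ℤ, (ν : ℝ) * w i = z)
    (hbd : ∀ w ∈ S, ∀ i ∈ J, |(ν : ℝ) * w i| ≤ K * (ν : ℝ) ^ e i)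
    (hdet : ∀ w ∈ S, ∀ w' ∈ S, (∀ i ∈ J, w i = w' i) → w = w') :
    S.Finite ∧ (S.ncard : ℝ) ≤ (2 * K + 1) ^ J.card * (ν : ℝ) ^ ∑ i ∈ J, e i := by
  obtain ⟨hfin, hcard⟩ := finite_ncard_le_prod_of_determined S (by positivity) J
    (fun _ _ => by positivity) hint hbd hdet
  exact ⟨hfin, hcard.trans (prod_two_mul_mul_pow_add_one_le J hK (by exact_mod_cast hν) e)⟩

theorem sum_erase_ite_val_lt {n s : ℕ} (hsn : s ≤ n) (i₀ : Fin n) (hi₀ : (i₀ : ℕ) < s) :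
    ∑ i ∈ univ.erase i₀, (if (i : ℕ) < s then 2 else 1) = n + s - 2 := by
  have htotal : ∑ i : Fin n, (if (i : ℕ) < s then 2 else 1) = n + s := by
    have hsplit := card_filter_add_card_filter_not (s := (univ : Finset (Fin n)))
      fun i => (i : ℕ) < s
    simp only [sum_ite, sum_const, smul_eq_mul, Fin.card_filter_val_lt, card_univ,
      Fintype.card_fin] at hsplit ⊢
    omega
  have herase := add_sum_erase univ (fun i : Fin n => if (i : ℕ) < s then 2 else 1)
    (mem_univ i₀)
  simp only [hi₀, if_true] at herase
  omega

theorem one_le_abs_mul_of_ne_zero {ν : ℕ} (hν : 0 < ν) {x : ℝ} (hx : ∃ z : ℤ, (ν : ℝ) * x = z)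
    (hx₀ : x ≠ 0) : 1 ≤ |(ν : ℝ) * x| := by
  obtain ⟨z, hz⟩ := hx
  have hz₀ : z ≠ 0 := by
    rintro rfl
    exact hx₀ ((mul_eq_zero.mp (by exact_mod_cast hz)).resolve_left (by positivity))
  rw [hz, ← Int.cast_abs]
  exact_mod_cast Int.one_le_abs hz₀

theorem abs_mul_le_mul_sq_of_one_le_abs_mul {ν x y K : ℝ} (hν : 0 ≤ ν) (hy : 1 ≤ |ν * y|)
    (hxy : |x * y| ≤ K) : |ν * x| ≤ K * ν ^ 2 :=
  calc |ν * x| ≤ |ν * x| * |ν * y| := le_mul_of_one_le_right (abs_nonneg _) hy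
    _ = ν ^ 2 * |x * y| := by
        simp only [abs_mul, abs_of_nonneg hν]
        ring
    _ ≤ K * ν ^ 2 := by
        rw [mul_comm K]
        exact mul_le_mul_of_nonneg_left hxy (by positivity)

def denomDvd (m ν : ℕ) : Set (Fin m → ℝ) := {w | ∀ i, ∃ z : ℤ, (ν : ℝ) * w i = z}

section Coordinates

variable {m : ℕ}

theorem coord_val_add_one (w : Fin m → ℝ) (i : Fin m) : coord w (i + 1) = w i := by
  rw [coord, dif_pos ⟨by omega, by omega⟩]
  rfl

theorem coord_eq_zero {k : ℕ} (w : Fin m → ℝ) (hk : ¬(1 ≤ k ∧ k ≤ m)) : coord w k = 0 :=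
  dif_neg hk

theorem eq_of_forall_coord_eq {w w' : Fin m → ℝ} (h : ∀ k, coord w k = coord w' k) : w = w' :=
  funext fun i => by simpa only [coord_val_add_one] using h (i + 1)

theorem exists_int_mul_coord {ν : ℕ} {w : Fin m → ℝ} (hw : w ∈ denomDvd m ν) (k : ℕ) :
    ∃ z : ℤ, (ν : ℝ) * coord w k = z := by
  unfold coord
  split_ifs
  · exact hw _
  · exact ⟨0, by simp⟩

noncomputable def quadricForm (r s : ℕ) (w : Fin m → ℝ) : ℝ :=
  ∑ i ∈ Icc 1 s, coord w i * coord w (r + i) + ∑ j ∈ Icc (s + 1) r, (coord w j) ^ 2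

theorem quadricForm_sub_of_coord_eq {r s : ℕ} (hsr : s ≤ r) {i₀ : ℕ} (hi₀ : i₀ ∈ Icc 1 s)
    {w w' : Fin m → ℝ} (h : ∀ k ≠ i₀, coord w k = coord w' k) :
    quadricForm r s w - quadricForm r s w' = (coord w i₀ - coord w' i₀) * coord w (r + i₀) := by
  obtain ⟨h1, h2⟩ := mem_Icc.mp hi₀
  have hsq : ∑ j ∈ Icc (s + 1) r, coord w j ^ 2 = ∑ j ∈ Icc (s + 1) r, coord w' j ^ 2 :=
    sum_congr rfl fun j hj => by rw [h j (by rw [mem_Icc] at hj; omega)]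
  have hprod : ∑ i ∈ Icc 1 s, coord w i * coord w (r + i)
      - ∑ i ∈ Icc 1 s, coord w' i * coord w' (r + i)
      = (coord w i₀ - coord w' i₀) * coord w (r + i₀) := by
    rw [← sum_sub_distrib, sum_eq_single i₀]
    · rw [h (r + i₀) (by omega)]
      ring
    · intro i hi hne
      rw [mem_Icc] at hi
      rw [h i hne, h (r + i) (by omega), sub_self]
    · exact fun h => (h hi₀).elim
  unfold quadricForm
  linarith

theorem eq_of_quadricForm_eq {r s : ℕ} (hsr : s ≤ r) {i₀ : ℕ} (hi₀ : i₀ ∈ Icc 1 s)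
    {w w' : Fin m → ℝ} (hq : quadricForm r s w = quadricForm r s w')
    (hne : coord w (r + i₀) ≠ 0) (h : ∀ i : Fin m, (i : ℕ) + 1 ≠ i₀ → w i = w' i) : w = w' := by
  have hoff : ∀ k ≠ i₀, coord w k = coord w' k := by
    intro k hk
    by_cases hkm : 1 ≤ k ∧ k ≤ m
    · have hk' : k = (⟨k - 1, by omega⟩ : Fin m).val + 1 := by simp only; omega
      rw [hk', coord_val_add_one, coord_val_add_one]
      exact h _ (by simp only; omega)
    · rw [coord_eq_zero w hkm, coord_eq_zero w' hkm]
  have hdiff := quadricForm_sub_of_coord_eq hsr hi₀ hoff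
  rw [hq, sub_self, zero_eq_mul] at hdiff
  have hcoord : coord w i₀ = coord w' i₀ := sub_eq_zero.mp (hdiff.resolve_right hne)
  exact eq_of_forall_coord_eq fun k => if hk : k = i₀ then hk ▸ hcoord else hoff k hk

def lastBlockZero (r : ℕ) : Set (Fin m → ℝ) :=
  {w | ∀ ℓ, r + 1 ≤ ℓ → ℓ ≤ m → coord w ℓ = 0}

def lastBlockFirstNonzero (r i₀ : ℕ) : Set (Fin m → ℝ) :=
  {w | coord w (r + i₀) ≠ 0 ∧ ∀ ℓ, r + 1 ≤ ℓ → ℓ < r + i₀ → coord w ℓ = 0}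

end Coordinates

theorem lastBlockZero_union_iUnion_lastBlockFirstNonzero (r s : ℕ) :
    (lastBlockZero r ∪ ⋃ i₀ ∈ Icc 1 s, lastBlockFirstNonzero r i₀ : Set (Fin (r + s) → ℝ))
      = Set.univ := by
  refine Set.eq_univ_of_forall fun w => ?_
  by_cases h : ∃ ℓ, r + 1 ≤ ℓ ∧ ℓ ≤ r + s ∧ coord w ℓ ≠ 0
  · obtain ⟨hl₁, hl₂, hne⟩ := Nat.find_spec h
    refine Or.inr (Set.mem_biUnion (x := Nat.find h - r)
      (by simp only [coe_Icc, Set.mem_Icc]; omega) ⟨?_, ?_⟩)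
    · rwa [Nat.add_sub_cancel' (by omega)]
    · intro ℓ h₁ h₂
      by_contra hne'
      exact Nat.find_min h (by omega) ⟨h₁, by omega, hne'⟩
  · exact Or.inl fun ℓ h₁ h₂ => not_not.mp fun hne => h ⟨ℓ, h₁, h₂, hne⟩

theorem finite_ncard_le_of_lastBlockFirstNonzero {r s : ℕ} (hsr : s ≤ r) {i₀ : ℕ}
    (hi₀ : i₀ ∈ Icc 1 s) {ν : ℕ} (hν : 0 < ν) {c₀ K : ℝ} (hK : 0 ≤ K)
    {S : Set (Fin (r + s) → ℝ)}
    (hS : ∀ w ∈ S, w ∈ denomDvd (r + s) ν ∧ quadricForm r s w = c₀ ∧ coord w (r + i₀) ≠ 0 ∧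
      (∀ j, s + 1 ≤ j → j ≤ r + s → |coord w j| ≤ K) ∧
      ∀ i, 1 ≤ i → i ≤ s → |coord w i * coord w (r + i₀)| ≤ K) :
    S.Finite ∧ (S.ncard : ℝ) ≤ (2 * K + 1) ^ (r + s - 1) * (ν : ℝ) ^ (r + s + s - 2) := by
  obtain ⟨h₁, h₂⟩ := mem_Icc.mp hi₀
  have hν₀ : (0 : ℝ) < ν := by exact_mod_cast hν
  set i₀' : Fin (r + s) := ⟨i₀ - 1, by omega⟩
  set e : Fin (r + s) → ℕ := fun i => if (i : ℕ) < s then 2 else 1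
  have hbd : ∀ w ∈ S, ∀ i ∈ univ.erase i₀', |(ν : ℝ) * w i| ≤ K * (ν : ℝ) ^ e i := by
    intro w hw i _
    obtain ⟨hwν, -, hne, ha, hb⟩ := hS w hw
    rw [← coord_val_add_one w i]
    by_cases his : (i : ℕ) < s
    · simp only [e, if_pos his]
      exact abs_mul_le_mul_sq_of_one_le_abs_mul hν₀.le
        (one_le_abs_mul_of_ne_zero hν (exists_int_mul_coord hwν _) hne)
        (hb (i + 1) (by omega) (by omega))
    · simp only [e, if_neg his, pow_one, abs_mul, abs_of_pos hν₀]
      nlinarith [ha (i + 1) (by omega) (by omega)]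
  have hdet : ∀ w ∈ S, ∀ w' ∈ S, (∀ i ∈ univ.erase i₀', w i = w' i) → w = w' := by
    intro w hw w' hw' h
    refine eq_of_quadricForm_eq hsr hi₀ ((hS w hw).2.1.trans (hS w' hw').2.1.symm)
      (hS w hw).2.2.1 fun i hi => h i (mem_erase.mpr ⟨fun he => hi ?_, mem_univ i⟩)
    rw [he]
    simp only [i₀']
    omega
  have := finite_ncard_le_of_forall_abs_le_pow S hν (univ.erase i₀') hK e
    (fun w hw i _ => (hS w hw).1 i) hbd hdet
  rwa [card_erase_of_mem (mem_univ _), card_univ, Fintype.card_fin,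
    sum_erase_ite_val_lt (by omega) i₀' (by simp only [i₀']; omega)] at this

theorem finite_ncard_le_of_apply_eq_zero {n : ℕ} (k : Fin n) {ν : ℕ} (hν : 0 < ν) {K : ℝ}
    (hK : 0 ≤ K) {S : Set (Fin n → ℝ)}
    (hS : ∀ w ∈ S, w ∈ denomDvd n ν ∧ (∀ i, |w i| ≤ K) ∧ w k = 0) :
    S.Finite ∧ (S.ncard : ℝ) ≤ (2 * K + 1) ^ (n - 1) * (ν : ℝ) ^ (n - 1) := by
  have hbd : ∀ w ∈ S, ∀ i ∈ univ.erase k, |(ν : ℝ) * w i| ≤ K * (ν : ℝ) ^ 1 := by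
    intro w hw i _
    rw [abs_mul, Nat.abs_cast, pow_one, mul_comm K]
    exact mul_le_mul_of_nonneg_left ((hS w hw).2.1 i) (Nat.cast_nonneg ν)
  have hdet : ∀ w ∈ S, ∀ w' ∈ S, (∀ i ∈ univ.erase k, w i = w' i) → w = w' := by
    intro w hw w' hw' h
    funext i
    by_cases hik : i = k
    · rw [hik, (hS w hw).2.2, (hS w' hw').2.2]
    · exact h i (mem_erase.mpr ⟨hik, mem_univ i⟩)
  have := finite_ncard_le_of_forall_abs_le_pow S hν (univ.erase k) hK (fun _ => 1)
    (fun w hw i _ => (hS w hw).1 i) hbd hdet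
  rwa [sum_const, smul_eq_mul, mul_one, card_erase_of_mem (mem_univ _), card_univ,
    Fintype.card_fin] at this

theorem finite_ncard_le_of_subset_union_biUnion {α ι : Type*} {S A : Set α} {t : Finset ι}
    {P : ι → Set α} {C : ℝ} (hS : S ⊆ A ∪ ⋃ i ∈ t, P i) (hA : A.Finite ∧ (A.ncard : ℝ) ≤ C)
    (hP : ∀ i ∈ t, (P i).Finite ∧ ((P i).ncard : ℝ) ≤ C) :
    S.Finite ∧ (S.ncard : ℝ) ≤ (t.card + 1) * C := by
  have hfin : (A ∪ ⋃ i ∈ t, P i).Finite :=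
    hA.1.union (t.finite_toSet.biUnion fun i hi => (hP i hi).1)
  refine ⟨hfin.subset hS, ?_⟩
  calc (S.ncard : ℝ) ≤ A.ncard + ∑ i ∈ t, ((P i).ncard : ℝ) := by
        have := (Set.ncard_le_ncard hS hfin).trans
          ((Set.ncard_union_le _ _).trans (Nat.add_le_add_left (t.set_ncard_biUnion_le P) _))
        exact_mod_cast this
    _ ≤ C + ∑ _i ∈ t, C := add_le_add hA.2 (sum_le_sum fun i hi => (hP i hi).2)
    _ = (t.card + 1) * C := by
        rw [sum_const, nsmul_eq_mul]
        ring

theorem statement3_general (r s : ℕ) (hs : 1 ≤ s) (hsr : s ≤ r)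
    (m : ℕ) (hm : m = r + s)
    (c₀ κ κ' : ℝ) (hκ : 0 < κ)
    (W : Set (Fin m → ℝ))
    (hW : W = {w : Fin m → ℝ |
      (∑ i ∈ Finset.Icc 1 s, coord w i * coord w (r + i)
          + ∑ j ∈ Finset.Icc (s + 1) r, (coord w j) ^ 2 = c₀) ∧
      (∀ j : ℕ, s + 1 ≤ j → j ≤ m → |coord w j| ≤ κ) ∧
      (∀ ℓ₀ : ℕ, r + 1 ≤ ℓ₀ → ℓ₀ ≤ m → coord w ℓ₀ ≠ 0 →
        (∀ ℓ : ℕ, r + 1 ≤ ℓ → ℓ < ℓ₀ → coord w ℓ = 0) →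
        ∀ i : ℕ, 1 ≤ i → i ≤ s → |coord w i * coord w ℓ₀| ≤ κ') ∧
      ((∀ ℓ : ℕ, r + 1 ≤ ℓ → ℓ ≤ m → coord w ℓ = 0) →
        ∀ i : ℕ, 1 ≤ i → i ≤ m → |coord w i| ≤ κ)}) :
    ∃ ρ : ℝ, 0 < ρ ∧ ∀ ν : ℕ, 0 < ν →
      (W ∩ {w : Fin m → ℝ | ∀ i : Fin m, ∃ z : ℤ, (ν : ℝ) * w i = (z : ℝ)}).Finite ∧
      ((W ∩ {w : Fin m → ℝ | ∀ i : Fin m, ∃ z : ℤ, (ν : ℝ) * w i = (z : ℝ)}).ncard : ℝ)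
        ≤ ρ * (ν : ℝ) ^ (m + s - 2) := by
  subst hm
  set K := max κ κ'
  have hK : 0 ≤ K := hκ.le.trans (le_max_left κ κ')
  refine ⟨(s + 1) * (2 * K + 1) ^ (r + s - 1), by positivity, fun ν hν => ?_⟩
  set S := W ∩ denomDvd (r + s) ν
  have hcover : S ⊆ (S ∩ lastBlockZero r) ∪ ⋃ i₀ ∈ Icc 1 s, S ∩ lastBlockFirstNonzero r i₀ := by
    rw [← Set.inter_iUnion₂, ← Set.inter_union_distrib_left,
      lastBlockZero_union_iUnion_lastBlockFirstNonzero, Set.inter_univ]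
  set C := (2 * K + 1) ^ (r + s - 1) * (ν : ℝ) ^ (r + s + s - 2)
  have hzero : (S ∩ lastBlockZero r).Finite ∧ ((S ∩ lastBlockZero r).ncard : ℝ) ≤ C := by
    obtain ⟨hfin, hcard⟩ := finite_ncard_le_of_apply_eq_zero ⟨r, by omega⟩ hν hK
      (S := S ∩ lastBlockZero r) fun w ⟨⟨hwW, hwν⟩, hw₀⟩ => by
        obtain ⟨-, -, -, hc⟩ := hW ▸ hwW
        refine ⟨hwν, fun i => ?_, ?_⟩ <;> rw [← coord_val_add_one w]
        · exact (hc hw₀ (i + 1) (by omega) (by omega)).trans (le_max_left κ κ')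
        · exact hw₀ (r + 1) le_rfl (by omega)
    exact ⟨hfin, hcard.trans (mul_le_mul_of_nonneg_left
      (pow_le_pow_right₀ (by exact_mod_cast hν) (by omega)) (by positivity))⟩
  have hnonzero : ∀ i₀ ∈ Icc 1 s, (S ∩ lastBlockFirstNonzero r i₀).Finite ∧
      ((S ∩ lastBlockFirstNonzero r i₀).ncard : ℝ) ≤ C := by
    intro i₀ hi₀
    obtain ⟨hi₀_pos, hi₀_le⟩ := mem_Icc.mp hi₀
    refine finite_ncard_le_of_lastBlockFirstNonzero hsr hi₀ hν (c₀ := c₀) hK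
      fun w ⟨⟨hwW, hwν⟩, hne, hmin⟩ => ?_
    obtain ⟨hq, ha, hb, -⟩ := hW ▸ hwW
    exact ⟨hwν, hq, hne, fun j hj₁ hj₂ => (ha j hj₁ hj₂).trans (le_max_left κ κ'),
      fun i hi₁ hi₂ => (hb _ (by omega) (by omega) hne hmin i hi₁ hi₂).trans (le_max_right κ κ')⟩
  obtain ⟨hfin, hcard⟩ := finite_ncard_le_of_subset_union_biUnion hcover hzero hnonzero
  rw [Nat.card_Icc, Nat.add_sub_cancel] at hcard
  exact ⟨hfin, hcard.trans_eq (by ring)⟩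

/-- Fix `r ≥ s ≥ 1`, `m = r + s`, `c₀ ∈ ℝ` and constants `κ, κ' > 0`.  Let `W` be the set of
points `w` of the quadric `∑_{i=1}^{s} w_i w_{r+i} + ∑_{j=s+1}^{r} w_j² = c₀` such that:
(a) `|w_j| ≤ κ` for `s+1 ≤ j ≤ m`; (b) if `ℓ₀` is the least index in `{r+1, …, m}` with
`w_{ℓ₀} ≠ 0` then `|w_i · w_{ℓ₀}| ≤ κ'` for all `1 ≤ i ≤ s`; and (c) if `w_ℓ = 0` for all
`r+1 ≤ ℓ ≤ m` then `|w_i| ≤ κ` for all `1 ≤ i ≤ m`.  Then there is a constant `ρ > 0`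
such that for every positive integer `ν` the set of `w ∈ W` with `ν·w ∈ ℤ^m` is finite
of cardinality at most `ρ · ν^(m+s-2)`. -/
theorem statement3 (r s : ℕ) (hs : 1 ≤ s) (hsr : s ≤ r)
    (m : ℕ) (hm : m = r + s)
    (c₀ κ κ' : ℝ) (hκ : 0 < κ) (hκ' : 0 < κ')
    (W : Set (Fin m → ℝ))
    (hW : W = {w : Fin m → ℝ |
      (∑ i ∈ Finset.Icc 1 s, coord w i * coord w (r + i)
          + ∑ j ∈ Finset.Icc (s + 1) r, (coord w j) ^ 2 = c₀) ∧
      (∀ j : ℕ, s + 1 ≤ j → j ≤ m → |coord w j| ≤ κ) ∧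
      (∀ ℓ₀ : ℕ, r + 1 ≤ ℓ₀ → ℓ₀ ≤ m → coord w ℓ₀ ≠ 0 →
        (∀ ℓ : ℕ, r + 1 ≤ ℓ → ℓ < ℓ₀ → coord w ℓ = 0) →
        ∀ i : ℕ, 1 ≤ i → i ≤ s → |coord w i * coord w ℓ₀| ≤ κ') ∧
      ((∀ ℓ : ℕ, r + 1 ≤ ℓ → ℓ ≤ m → coord w ℓ = 0) →
        ∀ i : ℕ, 1 ≤ i → i ≤ m → |coord w i| ≤ κ)}) :
    ∃ ρ : ℝ, 0 < ρ ∧ ∀ ν : ℕ, 0 < ν →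
      (W ∩ {w : Fin m → ℝ | ∀ i : Fin m, ∃ z : ℤ, (ν : ℝ) * w i = (z : ℝ)}).Finite ∧
      ((W ∩ {w : Fin m → ℝ | ∀ i : Fin m, ∃ z : ℤ, (ν : ℝ) * w i = (z : ℝ)}).ncard : ℝ)
        ≤ ρ * (ν : ℝ) ^ (m + s - 2) :=
  statement3_general r s hs hsr m hm c₀ κ κ' hκ W hW
end

section
/- Let p be an odd prime, m ≥ 3 an integer, a_1, …, a_m integers none of which is divisible by p, u a nonzero squarefree integer, and k ≥ 0 an integer. For each positive integer e, let N_e be the number of tuples x ∈ (ℤ/p^eℤ)^m satisfying Σ_{i=1}^m a_i·x_i² = p^{2k}·u in ℤ/p^eℤ. Then the sequence N_e / p^{(m−1)e} converges as e → ∞, and its limit is at least (1 − 2·p^{1−m/2}) / (1 − p^{1−m/2}). -/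
/-!
Split the solutions of `B(x) ≡ p^(2k) u (mod p^e)` into primitive ones (some `xᵢ` is a unit) and
imprimitive ones (every `xᵢ` is divisible by `p`). At a primitive solution the gradient `(2aᵢxᵢ)`
has a unit entry, and since `p^(2e) ≡ 0 (mod p^(e+1))` its lifts modulo `p^(e+1)` are cut out by one
nontrivial linear equation over `𝔽_p`: there are `p^(m-1)` of them. An imprimitive solution is
`x = p y` with `B(y) ≡ p^(2k-2) u (mod p^(e-2))`, and there is none when `k = 0` because `p² ∤ u`.
Induction on `k` gives `N_{e+1} = p^(m-1) N_e` for `e ≥ 2k+2`, so `N_e / p^((m-1)e)` is eventually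
constant, and its value is at least the proportion `P / p^(m-1)` of primitive solutions modulo `p`.

Over `𝔽_q`, peeling off two variables and evaluating a Jacobi sum gives
`N(b₀, b₁, b) - q^(m+1) = χ(-b₀b₁) q (N(b) - q^(m-1))`, whence `(|N(b) - q^(m-1)| + 1)² ≤ q^m`
for `m ≥ 2`. Discarding the zero vector, `P / p^(m-1) ≥ 1 - p^(1-m/2)`, which is at least
`(1 - 2p^(1-m/2)) / (1 - p^(1-m/2))`.
-/

open Finset Filter

section Counting

theorem Nat.card_subtype_eq_mul_of_card_fiber {α β : Type*} [Finite α] [Finite β] {P : α → Prop}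
    {Q : β → Prop} (f : α → β) (hPQ : ∀ x, P x → Q (f x)) {k : ℕ}
    (hk : ∀ y, Q y → Nat.card {x // P x ∧ f x = y} = k) :
    Nat.card {x // P x} = k * Nat.card {y // Q y} := by
  classical
  have := Fintype.ofFinite α
  have := Fintype.ofFinite β
  simp only [Nat.card_eq_fintype_card, Fintype.card_subtype] at hk ⊢
  rw [card_eq_sum_card_fiberwise (t := {y | Q y})
      fun x hx => by simpa using hPQ x (by simpa using hx),
    sum_congr rfl fun y hy => by rw [filter_filter, hk y (by simpa using hy)], sum_const,
    smul_eq_mul, mul_comm]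

namespace AddMonoidHom

variable {G H : Type*} [AddGroup G] [AddGroup H]

theorem card_fiber_of_surjective {f : G →+ H} (hf : Function.Surjective f) (h : H) :
    Nat.card {g // f g = h} = Nat.card f.ker :=
  Nat.card_congr (f.fiberEquivKerOfSurjective hf h)

theorem card_ker_mul_card_of_surjective {f : G →+ H} (hf : Function.Surjective f) :
    Nat.card f.ker * Nat.card H = Nat.card G := by
  rw [← f.ker.card_mul_index, AddSubgroup.index_ker, f.range_eq_top.mpr hf, AddSubgroup.card_top]

theorem card_preimage_eq_card_ker_mul [Finite G] [Finite H] (f : G →+ H) {T : H → Prop}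
    (hT : ∀ h, T h → h ∈ Set.range f) :
    Nat.card {g // T (f g)} = Nat.card f.ker * Nat.card {h // T h} := by
  refine Nat.card_subtype_eq_mul_of_card_fiber f (fun _ hg => hg) fun h hh => ?_
  obtain ⟨g₀, rfl⟩ := hT h hh
  exact Nat.card_congr
    ((Equiv.subtypeEquivRight fun g => ⟨And.right, fun hg => ⟨hg ▸ hh, hg⟩⟩).trans
      (f.fiberEquivKer g₀))

theorem card_ker_compLeft (f : G →+ H) (m : ℕ) :
    Nat.card (f.compLeft (Fin m)).ker = Nat.card f.ker ^ m := by
  rw [show Nat.card f.ker ^ m = Nat.card (Fin m → f.ker) by rw [Nat.card_fun, Nat.card_fin]]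
  refine Nat.card_congr ((Equiv.subtypeEquivRight fun y => ?_).trans Equiv.subtypePiEquivPi)
  simp [funext_iff]

end AddMonoidHom

theorem RingHom.card_ker_mul_card_of_surjective {R S : Type*} [Ring R] [Ring S] {π : R →+* S}
    (hπ : Function.Surjective π) : Nat.card (RingHom.ker π) * Nat.card S = Nat.card R :=
  AddMonoidHom.card_ker_mul_card_of_surjective (f := π.toAddMonoidHom) hπ

theorem Nat.card_sum_smul_eq_of_isUnit {R M : Type*} [Ring R] [AddCommGroup M] [Module R M]
    [Finite M] {m : ℕ} {c : Fin m → R} {i₀ : Fin m} (hc : IsUnit (c i₀)) (w : M) :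
    Nat.card {δ : Fin m → M // ∑ i, c i • δ i = w} = Nat.card M ^ (m - 1) := by
  let ℓ : (Fin m → M) →+ M :=
    ∑ i, (DistribSMul.toAddMonoidHom M (c i)).comp (Pi.evalAddMonoidHom (fun _ => M) i)
  have hℓ : ∀ δ, ℓ δ = ∑ i, c i • δ i := fun δ => by simp [ℓ]
  have hsurj : Function.Surjective ℓ := fun w => ⟨Pi.single i₀ (hc.unit⁻¹ • w), by
    simp only [hℓ, Pi.single_apply, smul_ite, smul_zero, sum_ite_eq', mem_univ, if_true,
      Units.smul_def, smul_smul, hc.mul_val_inv, one_smul]⟩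
  have hker := AddMonoidHom.card_ker_mul_card_of_surjective hsurj
  rw [Nat.card_fun, Nat.card_fin] at hker
  obtain ⟨k, rfl⟩ : ∃ k, m = k + 1 := ⟨m - 1, by have := i₀.pos; omega⟩
  rw [pow_succ] at hker
  calc _ = Nat.card {δ // ℓ δ = w} := by simp only [hℓ]
    _ = Nat.card ℓ.ker := AddMonoidHom.card_fiber_of_surjective hsurj w
    _ = Nat.card M ^ (k + 1 - 1) := Nat.eq_of_mul_eq_mul_right Nat.card_pos hker

theorem div_pow_mul_eq_of_succ_eq_pow_mul {f : ℕ → ℕ} {q d e₀ : ℕ} (hq : q ≠ 0)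
    (hf : ∀ e ≥ e₀, f (e + 1) = q ^ d * f e) :
    ∀ e ≥ e₀, (f e : ℝ) / (q : ℝ) ^ (d * e) = f e₀ / (q : ℝ) ^ (d * e₀) := by
  refine Nat.le_induction rfl fun e he ih => ?_
  rw [hf e he, Nat.cast_mul, Nat.cast_pow, mul_add, mul_one, pow_add, mul_comm ((q : ℝ) ^ d),
    mul_div_mul_right _ _ (pow_ne_zero _ (by exact_mod_cast hq)), ih]

end Counting

section DiagonalForm

variable {R S : Type*} [CommRing R] [CommRing S] {m : ℕ}

def diagForm (a x : Fin m → R) : R := ∑ i, a i * x i ^ 2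

noncomputable def solCount (a : Fin m → R) (c : R) : ℕ :=
  Nat.card {x : Fin m → R // diagForm a x = c}

noncomputable def primSolCount (a : Fin m → R) (c : R) : ℕ :=
  Nat.card {x : Fin m → R // diagForm a x = c ∧ ∃ i, IsUnit (x i)}

noncomputable def imprimSolCount (a : Fin m → R) (c : R) : ℕ :=
  Nat.card {x : Fin m → R // diagForm a x = c ∧ ∀ i, ¬IsUnit (x i)}

theorem map_diagForm (π : R →+* S) (a x : Fin m → R) :
    π (diagForm a x) = diagForm (fun i => π (a i)) (fun i => π (x i)) := by
  simp [diagForm]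

theorem diagForm_smul (a x : Fin m → R) (r : R) : diagForm a (r • x) = r ^ 2 * diagForm a x := by
  simp only [diagForm, mul_sum, Pi.smul_apply, smul_eq_mul]
  exact sum_congr rfl fun i _ => by ring

theorem diagForm_cons (a₀ x₀ : R) (a x : Fin m → R) :
    diagForm (Fin.cons a₀ a : Fin (m + 1) → R) (Fin.cons x₀ x) = a₀ * x₀ ^ 2 + diagForm a x := by
  simp [diagForm, Fin.sum_univ_succ]

theorem diagForm_add_of_mul_self_eq_zero (a x δ : Fin m → R) (hδ : ∀ i, δ i * δ i = 0) :
    diagForm a (x + δ) = diagForm a x + ∑ i, 2 * a i * x i • δ i := by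
  rw [diagForm, diagForm, ← sum_add_distrib]
  exact sum_congr rfl fun i _ => by
    simp only [Pi.add_apply, smul_eq_mul]; linear_combination a i * hδ i

theorem solCount_eq_primSolCount_add_imprimSolCount [Finite R] (a : Fin m → R) (c : R) :
    solCount a c = primSolCount a c + imprimSolCount a c := by
  classical
  have := Fintype.ofFinite R
  simp only [solCount, primSolCount, imprimSolCount, Nat.card_eq_fintype_card, Fintype.card_subtype]
  rw [← card_filter_add_card_filter_not (s := {x | diagForm a x = c}) fun x => ∃ i, IsUnit (x i)]
  simp only [filter_filter, not_exists]

theorem solCount_le_primSolCount_add_one {K : Type*} [Field K] [Finite K] (a : Fin m → K)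
    (c : K) : solCount a c ≤ primSolCount a c + 1 := by
  have : Subsingleton {x : Fin m → K // diagForm a x = c ∧ ∀ i, ¬IsUnit (x i)} :=
    ⟨fun x y => Subtype.ext <| funext fun i => by
      have hx := x.2.2 i
      have hy := y.2.2 i
      rw [isUnit_iff_ne_zero, not_not] at hx hy
      rw [hx, hy]⟩
  rw [solCount_eq_primSolCount_add_imprimSolCount]
  exact Nat.add_le_add_left (Finite.card_le_one_iff_subsingleton.mpr this) _

theorem solCount_cons [Fintype R] (a₀ : R) (a : Fin m → R) (c : R) :
    solCount (Fin.cons a₀ a : Fin (m + 1) → R) c = ∑ y, solCount a (c - a₀ * y ^ 2) := by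
  let e : {x : Fin (m + 1) → R // diagForm (Fin.cons a₀ a) x = c} ≃
      Σ y : R, {x : Fin m → R // diagForm a x = c - a₀ * y ^ 2} :=
    ((Fin.consEquiv fun _ => R).symm.subtypeEquiv fun x => by
        conv_lhs => rw [← Fin.cons_self_tail x]
        rw [diagForm_cons]; rfl).trans
      ((Equiv.subtypeProdEquivSigmaSubtype fun y x => a₀ * y ^ 2 + diagForm a x = c).trans
        (Equiv.sigmaCongrRight fun y => Equiv.subtypeEquivRight fun x => by
          rw [eq_sub_iff_add_eq']))
  rw [solCount, Nat.card_congr e, Nat.card_sigma]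
  rfl

theorem sum_solCount_sub [Fintype R] (a : Fin m → R) (c : R) :
    ∑ s, (solCount a (c - s) : ℤ) = (Fintype.card R : ℤ) ^ m := by
  rw [Fintype.sum_equiv (Equiv.subLeft c) (fun s => (solCount a (c - s) : ℤ))
    (fun s => (solCount a s : ℤ)) fun _ => rfl]
  unfold solCount
  rw [← Nat.cast_sum, ← Nat.card_sigma, Nat.card_congr (Equiv.sigmaFiberEquiv _), Nat.card_fun,
    Nat.card_eq_fintype_card, Nat.card_eq_fintype_card, Fintype.card_fin, Nat.cast_pow]

theorem solCount_fin_zero [DecidableEq R] (a : Fin 0 → R) (c : R) :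
    solCount a c = if c = 0 then 1 else 0 := by
  split_ifs with hc <;> simp [solCount, diagForm, hc, eq_comm]

end DiagonalForm

section FiniteField

variable {F : Type*} [Field F] [Fintype F]

theorem three_le_card_of_ringChar_ne_two (hF : ringChar F ≠ 2) : 3 ≤ Fintype.card F := by
  have h1 := Fintype.one_lt_card (α := F)
  have h2 := mt FiniteField.even_card_iff_char_two.mpr hF
  omega

variable [DecidableEq F] {m : ℕ}

theorem abs_quadraticChar_le_one (a : F) : |quadraticChar F a| ≤ 1 := by
  rcases quadraticChar_isQuadratic F a with h | h | h <;> simp [h]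

theorem abs_quadraticChar_mul_le (a : F) (x : ℤ) : |quadraticChar F a * x| ≤ |x| := by
  rw [abs_mul]
  exact mul_le_of_le_one_left (abs_nonneg x) (abs_quadraticChar_le_one a)

theorem card_mul_sq_eq (hF : ringChar F ≠ 2) {b : F} (hb : b ≠ 0) (s : F) :
    (#{y : F | b * y ^ 2 = s} : ℤ) = quadraticChar F (b * s) + 1 := by
  have hs : b * s = b ^ 2 * (b⁻¹ * s) := by field_simp
  rw [hs, map_mul, quadraticChar_sq_one' hb, one_mul, ← quadraticChar_card_sqrts hF,
    Set.toFinset_ofPred]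
  congr 2
  ext y
  simp only [mem_filter, mem_univ, true_and]
  rw [eq_inv_mul_iff_mul_eq₀ hb]

theorem sum_comp_mul_sq (hF : ringChar F ≠ 2) {b : F} (hb : b ≠ 0) (f : F → ℤ) :
    ∑ y, f (b * y ^ 2) = ∑ s, f s + quadraticChar F b * ∑ s, quadraticChar F s * f s := by
  rw [← Finset.sum_fiberwise univ (fun y => b * y ^ 2)]
  have hfib : ∀ s, ∑ y ∈ univ with b * y ^ 2 = s, f (b * y ^ 2)
      = (#{y : F | b * y ^ 2 = s} : ℤ) * f s := by
    intro s
    rw [Finset.sum_congr rfl fun y hy => by rw [(mem_filter.mp hy).2], sum_const, nsmul_eq_mul]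
  simp only [hfib, card_mul_sq_eq hF hb, map_mul, mul_sum]
  rw [← sum_add_distrib]
  exact sum_congr rfl fun s _ => by ring

theorem sum_quadraticChar_mul_quadraticChar_sub (hF : ringChar F ≠ 2) (r : F) :
    ∑ s, quadraticChar F s * quadraticChar F (r - s)
      = quadraticChar F (-1) * ((if r = 0 then (Fintype.card F : ℤ) else 0) - 1) := by
  split_ifs with hr
  · subst hr
    have h1 : ∀ s : F, quadraticChar F s * quadraticChar F (0 - s)
        = quadraticChar F (-1) * ((quadraticChar F) ^ 2) s := by
      intro s
      rw [zero_sub, neg_eq_neg_one_mul, map_mul, MulChar.pow_apply' _ two_ne_zero]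
      ring
    rw [sum_congr rfl fun s _ => h1 s, ← mul_sum, (quadraticChar_isQuadratic F).sq_eq_one,
      MulChar.sum_one_eq_card_units, Fintype.card_units, Nat.cast_sub Fintype.card_pos]
    simp
  · -- Substituting `s = r v` leaves the Jacobi sum `J(χ, χ) = J(χ, χ⁻¹) = -χ(-1)`.
    have h1 : ∀ v : F, quadraticChar F (r * v) * quadraticChar F (r - r * v)
        = quadraticChar F v * quadraticChar F (1 - v) := by
      intro v
      rw [show r - r * v = r * (1 - v) by ring, map_mul, map_mul]
      have := quadraticChar_sq_one (F := F) hr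
      linear_combination (quadraticChar F v * quadraticChar F (1 - v)) * this
    rw [← Fintype.sum_bijective _ (mulLeft_bijective₀ r hr) _ _ fun v => rfl,
      sum_congr rfl fun v _ => h1 v]
    have hJ := jacobiSum_nontrivial_inv (quadraticChar_ne_one hF)
    rw [(quadraticChar_isQuadratic F).inv] at hJ
    rw [← jacobiSum, hJ]
    ring

theorem sum_sum_quadraticChar_mul_quadraticChar (hF : ringChar F ≠ 2) (f : F → ℤ) :
    ∑ s, ∑ t, quadraticChar F s * quadraticChar F t * f (s + t)
      = quadraticChar F (-1) * (Fintype.card F * f 0 - ∑ r, f r) := by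
  have h1 : ∀ s, ∑ t, quadraticChar F s * quadraticChar F t * f (s + t)
      = ∑ r, f r * (quadraticChar F s * quadraticChar F (r - s)) := fun s =>
    Fintype.sum_equiv (Equiv.addLeft s) _ _ fun t => by
      simp only [Equiv.coe_addLeft, add_sub_cancel_left]; ring
  simp only [h1]
  rw [sum_comm]
  simp only [← mul_sum, sum_quadraticChar_mul_quadraticChar_sub hF]
  simp only [mul_sub, mul_ite, mul_zero, mul_one, sum_sub_distrib, sum_ite_eq', mem_univ, if_true,
    ← sum_mul]
  ring

theorem solCount_cons_eq (hF : ringChar F ≠ 2) {b₀ : F} (hb₀ : b₀ ≠ 0) (b : Fin m → F)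
    (c : F) :
    (solCount (Fin.cons b₀ b : Fin (m + 1) → F) c : ℤ)
      = (Fintype.card F : ℤ) ^ m
        + quadraticChar F b₀ * ∑ s, quadraticChar F s * solCount b (c - s) := by
  rw [solCount_cons, Nat.cast_sum,
    sum_comp_mul_sq hF hb₀ fun s => (solCount b (c - s) : ℤ), sum_solCount_sub]

theorem solCount_succ_succ (hF : ringChar F ≠ 2) {b : Fin (m + 2) → F} (hb₀ : b 0 ≠ 0)
    (hb₁ : b 1 ≠ 0) (c : F) :
    (solCount b c : ℤ) = (Fintype.card F : ℤ) ^ (m + 1) + quadraticChar F (-(b 0 * b 1))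
      * (Fintype.card F * solCount (Fin.tail (Fin.tail b)) c - (Fintype.card F : ℤ) ^ m) := by
  have hinner : ∀ s, quadraticChar F s * solCount (Fin.tail b) (c - s)
      = (Fintype.card F : ℤ) ^ m * quadraticChar F s + quadraticChar F (b 1)
        * ∑ t, quadraticChar F s * quadraticChar F t
          * solCount (Fin.tail (Fin.tail b)) (c - (s + t)) := by
    intro s
    conv_lhs => rw [show Fin.tail b = Fin.cons (b 1) (Fin.tail (Fin.tail b)) from
      (Fin.cons_self_tail _).symm]
    rw [solCount_cons_eq hF hb₁, mul_add, mul_sum, mul_sum, mul_sum]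
    simp only [sub_sub]
    congr 1
    · ring
    · exact sum_congr rfl fun t _ => by ring
  conv_lhs => rw [← Fin.cons_self_tail b]
  rw [solCount_cons_eq hF hb₀, sum_congr rfl fun s _ => hinner s, sum_add_distrib, ← mul_sum,
    quadraticChar_sum_zero hF, ← mul_sum,
    sum_sum_quadraticChar_mul_quadraticChar hF
      fun r => (solCount (Fin.tail (Fin.tail b)) (c - r) : ℤ),
    sub_zero, sum_solCount_sub, show -(b 0 * b 1) = -1 * b 0 * b 1 by ring, map_mul, map_mul]
  ring

theorem solCount_fin_one (hF : ringChar F ≠ 2) {b : Fin 1 → F} (hb : b 0 ≠ 0) (c : F) :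
    (solCount b c : ℤ) = 1 + quadraticChar F (b 0) * quadraticChar F c := by
  rw [← Fin.cons_self_tail b, solCount_cons_eq hF hb]
  simp [solCount_fin_zero, sub_eq_zero]

theorem abs_solCount_fin_two_sub_le (hF : ringChar F ≠ 2) {b : Fin 2 → F} (hb : ∀ i, b i ≠ 0)
    (c : F) : |(solCount b c : ℤ) - Fintype.card F| ≤ Fintype.card F - 1 := by
  have hq : (2 : ℤ) ≤ Fintype.card F := by exact_mod_cast Fintype.one_lt_card (α := F)
  rw [solCount_succ_succ (m := 0) hF (hb 0) (hb 1), solCount_fin_zero, pow_one,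
    add_sub_cancel_left]
  refine (abs_quadraticChar_mul_le _ _).trans ?_
  split_ifs <;> simp only [Nat.cast_one, Nat.cast_zero, mul_one, mul_zero, pow_zero] <;>
    rw [abs_le] <;> constructor <;> linarith

theorem abs_solCount_fin_three_sub_le (hF : ringChar F ≠ 2) {b : Fin 3 → F} (hb : ∀ i, b i ≠ 0)
    (c : F) : |(solCount b c : ℤ) - (Fintype.card F : ℤ) ^ 2| ≤ Fintype.card F := by
  rw [solCount_succ_succ (m := 1) hF (hb 0) (hb 1), solCount_fin_one hF (hb 2) c,
    show Fin.tail (Fin.tail b) 0 = b 2 from rfl, add_sub_cancel_left,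
    show (Fintype.card F : ℤ) * (1 + quadraticChar F (b 2) * quadraticChar F c)
      - (Fintype.card F : ℤ) ^ 1
      = quadraticChar F (b 2) * (quadraticChar F c * Fintype.card F) by ring]
  refine (abs_quadraticChar_mul_le _ _).trans ((abs_quadraticChar_mul_le _ _).trans ?_)
  rw [abs_mul, Nat.abs_cast]
  exact mul_le_of_le_one_left (Nat.cast_nonneg _) (abs_quadraticChar_le_one c)

theorem abs_solCount_sub_le_card_mul (hF : ringChar F ≠ 2) {b : Fin (m + 3) → F} (hb₀ : b 0 ≠ 0)
    (hb₁ : b 1 ≠ 0) (c : F) :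
    |(solCount b c : ℤ) - (Fintype.card F : ℤ) ^ (m + 2)|
      ≤ Fintype.card F
        * |(solCount (Fin.tail (Fin.tail b)) c : ℤ) - (Fintype.card F : ℤ) ^ m| := by
  rw [solCount_succ_succ hF hb₀ hb₁, add_sub_cancel_left,
    show (Fintype.card F : ℤ) * solCount (Fin.tail (Fin.tail b)) c - (Fintype.card F : ℤ) ^ (m + 1)
      = Fintype.card F * (solCount (Fin.tail (Fin.tail b)) c - (Fintype.card F : ℤ) ^ m) by ring]
  refine (abs_quadraticChar_mul_le _ _).trans ?_
  rw [abs_mul, Nat.abs_cast]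

theorem sq_abs_solCount_sub_add_one_le (hF : ringChar F ≠ 2) :
    ∀ (m : ℕ) (b : Fin (m + 2) → F), (∀ i, b i ≠ 0) → ∀ c : F,
      (|(solCount b c : ℤ) - (Fintype.card F : ℤ) ^ (m + 1)| + 1) ^ 2
        ≤ (Fintype.card F : ℤ) ^ (m + 2)
  | 0, b, hb, c => by
    have := abs_solCount_fin_two_sub_le hF hb c
    rw [pow_one]
    exact pow_le_pow_left₀ (by positivity) (by linarith) 2
  | 1, b, hb, c => by
    have hq : (3 : ℤ) ≤ Fintype.card F := by exact_mod_cast three_le_card_of_ringChar_ne_two hF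
    have := abs_solCount_fin_three_sub_le hF hb c
    calc _ ≤ ((Fintype.card F : ℤ) + 1) ^ 2 := pow_le_pow_left₀ (by positivity) (by linarith) 2
      _ ≤ (Fintype.card F : ℤ) ^ 3 := by nlinarith
  | m + 2, b, hb, c => by
    have ih := sq_abs_solCount_sub_add_one_le hF m (Fin.tail (Fin.tail b)) (fun i => hb _) c
    have hstep := abs_solCount_sub_le_card_mul (m := m + 1) hF (hb 0) (hb 1) c
    have hq : (1 : ℤ) ≤ Fintype.card F := by exact_mod_cast Fintype.card_pos
    calc _ ≤ ((Fintype.card F : ℤ) * (|(solCount (Fin.tail (Fin.tail b)) c : ℤ)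
          - (Fintype.card F : ℤ) ^ (m + 1)| + 1)) ^ 2 :=
          pow_le_pow_left₀ (by positivity) (by nlinarith) 2
      _ ≤ (Fintype.card F : ℤ) ^ 2 * (Fintype.card F : ℤ) ^ (m + 2) := by
          rw [mul_pow]; exact mul_le_mul_of_nonneg_left ih (by positivity)
      _ = (Fintype.card F : ℤ) ^ (m + 2 + 2) := by ring

theorem le_rpow_div_two_of_sq_le {x y : ℝ} (hx : 0 ≤ x) (hy : 0 ≤ y) {n : ℕ}
    (h : x ^ 2 ≤ y ^ n) : x ≤ y ^ ((n : ℝ) / 2) := by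
  rwa [← pow_le_pow_iff_left₀ hx (by positivity) two_ne_zero, ← Real.rpow_mul_natCast hy,
    Nat.cast_two, div_mul_cancel₀ _ two_ne_zero, Real.rpow_natCast]

theorem pow_sub_rpow_le_primSolCount (hF : ringChar F ≠ 2) (hm : 2 ≤ m) {a : Fin m → F}
    (ha : ∀ i, a i ≠ 0) (c : F) :
    (Fintype.card F : ℝ) ^ (m - 1) - (Fintype.card F : ℝ) ^ ((m : ℝ) / 2) ≤ primSolCount a c := by
  obtain ⟨n, rfl⟩ : ∃ n, m = n + 2 := ⟨m - 2, by omega⟩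
  have hbound := sq_abs_solCount_sub_add_one_le hF n a ha c
  have hprim := solCount_le_primSolCount_add_one a c
  have hsqrt := le_rpow_div_two_of_sq_le (by positivity) (Nat.cast_nonneg (Fintype.card F))
    (x := |(solCount a c : ℝ) - (Fintype.card F : ℝ) ^ (n + 1)| + 1) (by exact_mod_cast hbound)
  have hprim' : (solCount a c : ℝ) ≤ primSolCount a c + 1 := by exact_mod_cast hprim
  have := neg_abs_le ((solCount a c : ℝ) - (Fintype.card F : ℝ) ^ (n + 1))
  rw [show n + 2 - 1 = n + 1 from rfl]
  linarith

end FiniteField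

section SquareZero

variable {R S : Type*} [CommRing R] [CommRing S] {m : ℕ} {π : R →+* S}

theorem isUnit_of_isUnit_map_of_sq_eq_zero (hπ : Function.Surjective π)
    (hsq : ∀ x ∈ RingHom.ker π, ∀ y ∈ RingHom.ker π, x * y = 0) {x : R} (hx : IsUnit (π x)) :
    IsUnit x := by
  obtain ⟨y, hy⟩ := hπ ↑hx.unit⁻¹
  have hk : x * y - 1 ∈ RingHom.ker π := by simp [RingHom.mem_ker, hy]
  refine IsUnit.of_mul_eq_one (y * (1 - (x * y - 1))) ?_
  linear_combination -hsq _ hk _ hk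

theorem card_lifts_of_sq_eq_zero [Finite R]
    (hsq : ∀ x ∈ RingHom.ker π, ∀ y ∈ RingHom.ker π, x * y = 0) {a x₀ : Fin m → R} {c : R}
    {i₀ : Fin m} (hunit : IsUnit (2 * a i₀ * x₀ i₀)) (hc : π (diagForm a x₀) = π c) :
    Nat.card {x : Fin m → R // (∀ i, π (x i) = π (x₀ i)) ∧ diagForm a x = c}
      = Nat.card (RingHom.ker π) ^ (m - 1) := by
  set I := RingHom.ker π
  have hw : c - diagForm a x₀ ∈ I := by simp [I, RingHom.mem_ker, hc]
  -- As `(ker π)² = 0`, the form is affine on the fibre `x₀ + (ker π)ᵐ`.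
  have hexpand : ∀ δ : Fin m → I, diagForm a (x₀ + fun i => (δ i : R))
      = diagForm a x₀ + ↑(∑ i, (2 * a i * x₀ i) • δ i) := fun δ => by
    rw [diagForm_add_of_mul_self_eq_zero _ _ _ fun i => hsq _ (δ i).2 _ (δ i).2]
    simp [mul_assoc]
  rw [← Nat.card_sum_smul_eq_of_isUnit (c := fun i => 2 * a i * x₀ i) hunit
    (⟨c - diagForm a x₀, hw⟩ : I)]
  refine Nat.card_congr
    { toFun := fun ⟨x, hxπ, hxc⟩ => ⟨fun i => ⟨x i - x₀ i, by simp [I, RingHom.mem_ker, hxπ i]⟩, by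
        have h := hexpand fun i => ⟨x i - x₀ i, by simp [I, RingHom.mem_ker, hxπ i]⟩
        rw [show (x₀ + fun i => x i - x₀ i) = x by ext; simp, hxc] at h
        ext
        change _ = c - diagForm a x₀
        linear_combination -h⟩
      invFun := fun δ => ⟨x₀ + fun i => (δ.1 i : R), fun i => by simp [I, ← RingHom.mem_ker], by
        rw [hexpand, δ.2]; ring⟩
      left_inv := fun ⟨x, _, _⟩ => by ext; simp
      right_inv := fun δ => by ext; simp }

theorem primSolCount_eq_of_sq_eq_zero [Finite R] [Finite S] (hπ : Function.Surjective π)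
    (hsq : ∀ x ∈ RingHom.ker π, ∀ y ∈ RingHom.ker π, x * y = 0)
    (h2 : IsUnit (2 : R)) {a : Fin m → R} (ha : ∀ i, IsUnit (a i)) (c : R) :
    primSolCount a c
      = Nat.card (RingHom.ker π) ^ (m - 1) * primSolCount (fun i => π (a i)) (π c) := by
  refine Nat.card_subtype_eq_mul_of_card_fiber (fun x i => π (x i))
    (fun x ⟨hx, i, hi⟩ => ⟨by rw [← map_diagForm, hx], i, hi.map π⟩) ?_
  rintro y ⟨hy, i₀, hi₀⟩
  choose x₀ hx₀ using fun i => hπ (y i)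
  have hlift : ∀ x : Fin m → R, (∀ i, π (x i) = y i) → IsUnit (x i₀) := fun x hx =>
    isUnit_of_isUnit_map_of_sq_eq_zero hπ hsq (by rw [hx]; exact hi₀)
  rw [← card_lifts_of_sq_eq_zero hsq ((h2.mul (ha i₀)).mul (hlift x₀ hx₀))
    (c := c) (by rw [map_diagForm, ← hy]; congr; ext; exact hx₀ _)]
  refine Nat.card_congr (Equiv.subtypeEquivRight fun x => ?_)
  simp only [funext_iff, hx₀]
  exact ⟨fun ⟨⟨hc, _⟩, hx⟩ => ⟨hx, hc⟩, fun ⟨hx, hc⟩ => ⟨⟨hc, i₀, hlift x hx⟩, hx⟩⟩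

end SquareZero

section ZModPrimePower

variable {m : ℕ}

theorem castHom_eq_zero_iff_exists_eq_mul {d N : ℕ} [NeZero N] (h : d ∣ N) (x : ZMod N) :
    ZMod.castHom h (ZMod d) x = 0 ↔ ∃ y, x = d * y := by
  constructor
  · intro hx
    rw [← ZMod.natCast_zmod_val x, map_natCast, ZMod.natCast_eq_zero_iff] at hx
    obtain ⟨k, hk⟩ := hx
    exact ⟨k, by rw [← ZMod.natCast_zmod_val x, hk, Nat.cast_mul]⟩
  · rintro ⟨y, rfl⟩
    rw [map_mul, map_natCast, ZMod.natCast_self, zero_mul]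

theorem natCast_mul_eq_zero_iff {d n N : ℕ} [NeZero N] (hN : N = d * n) (x : ZMod N) :
    (d : ZMod N) * x = 0 ↔ ZMod.castHom (Dvd.intro_left d hN.symm) (ZMod n) x = 0 := by
  have hd : d ≠ 0 := by rintro rfl; exact NeZero.ne N (by simp [hN])
  have hdvd : N ∣ d * x.val ↔ d * n ∣ d * x.val := by rw [← hN]
  rw [← ZMod.natCast_zmod_val x, map_natCast, ← Nat.cast_mul, ZMod.natCast_eq_zero_iff,
    ZMod.natCast_eq_zero_iff, hdvd, Nat.mul_dvd_mul_iff_left (Nat.pos_of_ne_zero hd)]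

theorem card_ker_castHom {d n N : ℕ} [NeZero N] (hN : N = d * n) :
    Nat.card (RingHom.ker (ZMod.castHom (Dvd.intro_left d hN.symm) (ZMod n))) = d := by
  have :=
    RingHom.card_ker_mul_card_of_surjective (ZMod.castHom_surjective (Dvd.intro_left d hN.symm))
  rw [Nat.card_zmod, Nat.card_zmod] at this
  have hn : n ≠ 0 := by rintro rfl; exact NeZero.ne N (by simp [hN])
  exact Nat.eq_of_mul_eq_mul_right (Nat.pos_of_ne_zero hn) (this.trans hN)

theorem card_ker_mulLeft_natCast {d n N : ℕ} [NeZero N] (hN : N = d * n) :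
    Nat.card (AddMonoidHom.mulLeft (d : ZMod N)).ker = d := by
  exact (Nat.card_congr (Equiv.subtypeEquivRight fun x => natCast_mul_eq_zero_iff hN x)).trans
    (card_ker_castHom hN)

variable {p : ℕ} [Fact p.Prime]

theorem isUnit_iff_castHom_ne_zero {k : ℕ} (hk : k ≠ 0) (x : ZMod (p ^ k)) :
    IsUnit x ↔ ZMod.castHom (dvd_pow_self p hk) (ZMod p) x ≠ 0 := by
  have : NeZero (p ^ k) := ⟨pow_ne_zero k (Fact.out : p.Prime).ne_zero⟩
  rw [← ZMod.natCast_zmod_val x, map_natCast, ZMod.isUnit_iff_coprime, Ne, ZMod.natCast_eq_zero_iff,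
    Nat.coprime_pow_right_iff (Nat.pos_of_ne_zero hk), Nat.coprime_comm,
    (Fact.out : p.Prime).coprime_iff_not_dvd]

theorem isUnit_intCast_iff_not_dvd {k : ℕ} (hk : k ≠ 0) (z : ℤ) :
    IsUnit (z : ZMod (p ^ k)) ↔ ¬(p : ℤ) ∣ z := by
  rw [isUnit_iff_castHom_ne_zero hk, map_intCast, Ne, ZMod.intCast_zmod_eq_zero_iff_dvd]

theorem exists_eq_mul_of_not_isUnit {k : ℕ} (hk : k ≠ 0) {x : ZMod (p ^ k)} (hx : ¬IsUnit x) :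
    ∃ y, x = p * y := by
  have : NeZero (p ^ k) := ⟨pow_ne_zero k (Fact.out : p.Prime).ne_zero⟩
  rw [isUnit_iff_castHom_ne_zero hk, not_not] at hx
  exact (castHom_eq_zero_iff_exists_eq_mul _ x).mp hx

theorem not_isUnit_natCast_mul {k : ℕ} (hk : k ≠ 0) (y : ZMod (p ^ k)) :
    ¬IsUnit ((p : ZMod (p ^ k)) * y) := by
  rw [isUnit_iff_castHom_ne_zero hk, map_mul, map_natCast, ZMod.natCast_self, zero_mul, not_not]

theorem mul_eq_zero_of_mem_ker_castHom {e : ℕ} (he : e ≠ 0) {x y : ZMod (p ^ (e + 1))}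
    (hx : x ∈ RingHom.ker (ZMod.castHom (pow_dvd_pow p (Nat.le_add_right e 1)) (ZMod (p ^ e))))
    (hy : y ∈ RingHom.ker (ZMod.castHom (pow_dvd_pow p (Nat.le_add_right e 1)) (ZMod (p ^ e)))) :
    x * y = 0 := by
  have : NeZero (p ^ (e + 1)) := ⟨pow_ne_zero _ (Fact.out : p.Prime).ne_zero⟩
  obtain ⟨x, rfl⟩ := (castHom_eq_zero_iff_exists_eq_mul _ x).mp hx
  obtain ⟨y, rfl⟩ := (castHom_eq_zero_iff_exists_eq_mul _ y).mp hy
  obtain ⟨f, rfl⟩ : ∃ f, e = f + 1 := Nat.exists_eq_succ_of_ne_zero he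
  calc _ = ((p ^ (f + 1 + 1) : ℕ) : ZMod (p ^ (f + 1 + 1))) * (p ^ f * x * y) := by push_cast; ring
    _ = 0 := by rw [ZMod.natCast_self, zero_mul]

theorem primSolCount_zmod_pow_succ (hp2 : p ≠ 2) {e : ℕ} (he : e ≠ 0)
    {a : Fin m → ZMod (p ^ (e + 1))} (ha : ∀ i, IsUnit (a i)) (c : ZMod (p ^ (e + 1))) :
    primSolCount a c = p ^ (m - 1) * primSolCount
      (fun i => ZMod.castHom (pow_dvd_pow p (Nat.le_add_right e 1)) (ZMod (p ^ e)) (a i))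
      (ZMod.castHom (pow_dvd_pow p (Nat.le_add_right e 1)) (ZMod (p ^ e)) c) := by
  have : NeZero (p ^ (e + 1)) := ⟨pow_ne_zero _ (Fact.out : p.Prime).ne_zero⟩
  have h2 : IsUnit (2 : ZMod (p ^ (e + 1))) := by
    have h := (isUnit_intCast_iff_not_dvd (p := p) (Nat.succ_ne_zero e) 2).mpr fun h => hp2 <|
      (Nat.prime_dvd_prime_iff_eq Fact.out Nat.prime_two).mp (by exact_mod_cast h)
    simpa using h
  rw [primSolCount_eq_of_sq_eq_zero (ZMod.castHom_surjective _)
    (fun x hx y hy => mul_eq_zero_of_mem_ker_castHom he hx hy) h2 ha,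
    card_ker_castHom (d := p) (n := p ^ e) (by ring)]

theorem diagForm_natCast_smul_eq_iff {e : ℕ} (a y : Fin m → ZMod (p ^ (e + 2)))
    (c : ZMod (p ^ (e + 2))) :
    diagForm a ((p : ZMod (p ^ (e + 2))) • y) = p ^ 2 * c ↔
      diagForm (fun i => ZMod.castHom (pow_dvd_pow p (Nat.le_add_right e 2)) (ZMod (p ^ e)) (a i))
        (fun i => ZMod.castHom (pow_dvd_pow p (Nat.le_add_right e 2)) (ZMod (p ^ e)) (y i))
        = ZMod.castHom (pow_dvd_pow p (Nat.le_add_right e 2)) (ZMod (p ^ e)) c := by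
  have : NeZero (p ^ (e + 2)) := ⟨pow_ne_zero _ (Fact.out : p.Prime).ne_zero⟩
  rw [diagForm_smul, ← sub_eq_zero, ← mul_sub, ← Nat.cast_pow,
    natCast_mul_eq_zero_iff (n := p ^ e) (by ring), map_sub, sub_eq_zero, map_diagForm]

theorem imprimSolCount_eq_zero {e : ℕ} (a : Fin m → ZMod (p ^ (e + 2))) {c : ZMod (p ^ (e + 2))}
    (hc : ZMod.castHom (pow_dvd_pow p (Nat.le_add_left 2 e)) (ZMod (p ^ 2)) c ≠ 0) :
    imprimSolCount a c = 0 := by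
  refine Nat.card_eq_zero.mpr (Or.inl ⟨fun ⟨x, hx, hnu⟩ => hc ?_⟩)
  choose y hy using fun i => exists_eq_mul_of_not_isUnit (Nat.succ_ne_zero _) (hnu i)
  rw [← hx, show x = (p : ZMod (p ^ (e + 2))) • y from funext hy, diagForm_smul, map_mul, map_pow,
    map_natCast, ← Nat.cast_pow, ZMod.natCast_self, zero_mul]

theorem imprimSolCount_natCast_sq_mul {e : ℕ} (a : Fin m → ZMod (p ^ (e + 2)))
    (c : ZMod (p ^ (e + 2))) :
    imprimSolCount a ((p : ZMod (p ^ (e + 2))) ^ 2 * c)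
      = p ^ m * solCount (fun i => ZMod.castHom (pow_dvd_pow p (Nat.le_add_right e 2)) _ (a i))
          (ZMod.castHom (pow_dvd_pow p (Nat.le_add_right e 2)) (ZMod (p ^ e)) c) := by
  have hp := (Fact.out : p.Prime).pos
  have : NeZero (p ^ (e + 2)) := ⟨by positivity⟩
  -- Count the `y` for which `p • y` is an imprimitive solution in two ways: the fibres of
  -- `y ↦ p • y` have `p^m` points, those of the reduction `ρ` modulo `p^e` have `p^(2m)`.
  set ρ := ZMod.castHom (pow_dvd_pow p (Nat.le_add_right e 2)) (ZMod (p ^ e))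
  let φ := (AddMonoidHom.mulLeft (p : ZMod (p ^ (e + 2)))).compLeft (Fin m)
  let ρm := ρ.toAddMonoidHom.compLeft (Fin m)
  have hρ := ρm.card_preimage_eq_card_ker_mul (T := fun z => diagForm (fun i => ρ (a i)) z = ρ c)
    fun z _ => (ZMod.castHom_surjective (pow_dvd_pow p (Nat.le_add_right e 2))).comp_left z
  have hφ := φ.card_preimage_eq_card_ker_mul
    (T := fun x => diagForm a x = p ^ 2 * c ∧ ∀ i, ¬IsUnit (x i)) fun x ⟨_, hx⟩ => by
      choose y hy using fun i => exists_eq_mul_of_not_isUnit (Nat.succ_ne_zero _) (hx i)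
      exact ⟨y, (funext hy).symm⟩
  have hsame : Nat.card {y // diagForm a (φ y) = p ^ 2 * c ∧ ∀ i, ¬IsUnit (φ y i)}
      = Nat.card {y // diagForm (fun i => ρ (a i)) (ρm y) = ρ c} :=
    Nat.card_congr (Equiv.subtypeEquivRight fun y => (and_iff_left fun i =>
      not_isUnit_natCast_mul (Nat.succ_ne_zero _) (y i)).trans (diagForm_natCast_smul_eq_iff a y c))
  have hkerρ : Nat.card ρ.toAddMonoidHom.ker = p ^ 2 := card_ker_castHom (n := p ^ e) (by ring)
  rw [hsame, hρ, AddMonoidHom.card_ker_compLeft, hkerρ, AddMonoidHom.card_ker_compLeft,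
    card_ker_mulLeft_natCast (n := p ^ (e + 1)) (by ring)] at hφ
  unfold imprimSolCount solCount
  exact Nat.eq_of_mul_eq_mul_left (pow_pos hp m) (by rw [← hφ]; ring)

end ZModPrimePower

section LocalDensity

variable {p : ℕ} [Fact p.Prime] {m : ℕ}

theorem primSolCount_intCast_pow_succ (hp2 : p ≠ 2) {e : ℕ} (he : e ≠ 0) {a : Fin m → ℤ}
    (ha : ∀ i, ¬(p : ℤ) ∣ a i) (C : ℤ) :
    primSolCount (fun i => (a i : ZMod (p ^ (e + 1)))) (C : ZMod (p ^ (e + 1)))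
      = p ^ (m - 1) * primSolCount (fun i => (a i : ZMod (p ^ e))) (C : ZMod (p ^ e)) := by
  rw [primSolCount_zmod_pow_succ hp2 he
    fun i => (isUnit_intCast_iff_not_dvd (Nat.succ_ne_zero e) _).mpr (ha i)]
  simp only [map_intCast]

theorem imprimSolCount_intCast_eq_zero {e : ℕ} (a : Fin m → ℤ) {C : ℤ} (hC : ¬(p : ℤ) ^ 2 ∣ C) :
    imprimSolCount (fun i => (a i : ZMod (p ^ (e + 2)))) (C : ZMod (p ^ (e + 2))) = 0 := by
  refine imprimSolCount_eq_zero _ ?_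
  rwa [map_intCast, Ne, ZMod.intCast_zmod_eq_zero_iff_dvd, Nat.cast_pow]

theorem imprimSolCount_intCast_sq_mul (e : ℕ) (a : Fin m → ℤ) (C : ℤ) :
    imprimSolCount (fun i => (a i : ZMod (p ^ (e + 2))))
        (((p : ℤ) ^ 2 * C : ℤ) : ZMod (p ^ (e + 2)))
      = p ^ m * solCount (fun i => (a i : ZMod (p ^ e))) (C : ZMod (p ^ e)) := by
  push_cast
  rw [imprimSolCount_natCast_sq_mul]
  simp only [map_intCast]

theorem solCount_intCast_pow_succ (hp2 : p ≠ 2) {a : Fin m → ℤ} (ha : ∀ i, ¬(p : ℤ) ∣ a i)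
    {u : ℤ} (hu : ¬(p : ℤ) ^ 2 ∣ u) (k : ℕ) {e : ℕ} (he : 2 * k + 2 ≤ e) :
    solCount (fun i => (a i : ZMod (p ^ (e + 1))))
        (((p : ℤ) ^ (2 * k) * u : ℤ) : ZMod (p ^ (e + 1)))
      = p ^ (m - 1) * solCount (fun i => (a i : ZMod (p ^ e)))
        (((p : ℤ) ^ (2 * k) * u : ℤ) : ZMod (p ^ e)) := by
  induction k generalizing e with
  | zero =>
    obtain ⟨f, rfl⟩ : ∃ f, e = f + 2 := ⟨e - 2, by omega⟩
    simp only [mul_zero, pow_zero, one_mul]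
    rw [solCount_eq_primSolCount_add_imprimSolCount, solCount_eq_primSolCount_add_imprimSolCount,
      primSolCount_intCast_pow_succ hp2 (by omega) ha,
      imprimSolCount_intCast_eq_zero (e := f + 1) a hu, imprimSolCount_intCast_eq_zero a hu,
      add_zero, add_zero]
  | succ k ih =>
    obtain ⟨f, rfl⟩ : ∃ f, e = f + 2 := ⟨e - 2, by omega⟩
    rw [show (p : ℤ) ^ (2 * (k + 1)) * u = (p : ℤ) ^ 2 * ((p : ℤ) ^ (2 * k) * u) by ring,
      solCount_eq_primSolCount_add_imprimSolCount, solCount_eq_primSolCount_add_imprimSolCount,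
      primSolCount_intCast_pow_succ hp2 (by omega) ha, imprimSolCount_intCast_sq_mul (f + 1),
      imprimSolCount_intCast_sq_mul f, ih (by omega)]
    ring

theorem one_sub_rpow_le_primSolCount_intCast_div (hp2 : p ≠ 2) (hm : 2 ≤ m) {a : Fin m → ℤ}
    (ha : ∀ i, ¬(p : ℤ) ∣ a i) (C : ℤ) {e : ℕ} (he : 1 ≤ e) :
    1 - (p : ℝ) ^ ((2 - (m : ℝ)) / 2)
      ≤ primSolCount (fun i => (a i : ZMod (p ^ e))) (C : ZMod (p ^ e))
        / (p : ℝ) ^ ((m - 1) * e) := by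
  have hp : (0 : ℝ) < p := by exact_mod_cast (Fact.out : p.Prime).pos
  have hconst := div_pow_mul_eq_of_succ_eq_pow_mul
    (f := fun e => primSolCount (fun i => (a i : ZMod (p ^ e))) (C : ZMod (p ^ e)))
    (Fact.out : p.Prime).ne_zero
    (fun e (he : 1 ≤ e) => primSolCount_intCast_pow_succ hp2 (by omega) ha C) e he
  have hrpow : (p : ℝ) ^ ((2 - (m : ℝ)) / 2) * (p : ℝ) ^ (m - 1) = (p : ℝ) ^ ((m : ℝ) / 2) := by
    rw [← Real.rpow_natCast, ← Real.rpow_add hp, Nat.cast_sub (by omega : 1 ≤ m)]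
    congr 1
    push_cast
    ring
  rw [hconst, mul_one, le_div_iff₀ (by positivity), sub_mul, one_mul, hrpow]
  have : Fact (p ^ 1).Prime := ⟨by rw [pow_one]; exact Fact.out⟩
  have hF : ringChar (ZMod (p ^ 1)) ≠ 2 := by rwa [ZMod.ringChar_zmod_n, pow_one]
  simpa using pow_sub_rpow_le_primSolCount hF hm (a := fun i => (a i : ZMod (p ^ 1)))
    (fun i => by rw [Ne, ZMod.intCast_zmod_eq_zero_iff_dvd, pow_one]; exact ha i) (C : ZMod (p ^ 1))

end LocalDensity

theorem one_sub_two_mul_div_one_sub_le {t : ℝ} (ht : t < 1) : (1 - 2 * t) / (1 - t) ≤ 1 - t := by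
  rw [div_le_iff₀ (by linarith)]
  nlinarith [sq_nonneg t]

theorem statement6_general (p : ℕ) (hp : p.Prime) (hodd : p ≠ 2)
    (m : ℕ) (hm : 3 ≤ m)
    (a : Fin m → ℤ) (ha : ∀ i, ¬ (p : ℤ) ∣ a i)
    (u : ℤ) (hu : Squarefree u) (k : ℕ)
    (N : ℕ → ℕ)
    (hN : ∀ e : ℕ, 1 ≤ e →
      N e = Nat.card {x : Fin m → ZMod (p ^ e) //
        ∑ i, (a i : ZMod (p ^ e)) * (x i) ^ 2
          = (((p : ℤ) ^ (2 * k) * u : ℤ) : ZMod (p ^ e))}) :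
    ∃ L : ℝ,
      Tendsto (fun e : ℕ => (N e : ℝ) / (p : ℝ) ^ ((m - 1) * e)) atTop (nhds L) ∧
      (1 - 2 * (p : ℝ) ^ ((2 - (m : ℝ)) / 2)) / (1 - (p : ℝ) ^ ((2 - (m : ℝ)) / 2))
        ≤ L := by
  have : Fact p.Prime := ⟨hp⟩
  have hu2 : ¬(p : ℤ) ^ 2 ∣ u := fun h =>
    (Nat.prime_iff_prime_int.mp hp).not_isUnit (hu _ (by rwa [← sq]))
  have hconst := div_pow_mul_eq_of_succ_eq_pow_mul (f := N) hp.ne_zero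
    fun e (he : 2 * k + 2 ≤ e) => by
      rw [hN _ (by omega), hN _ (by omega)]
      exact solCount_intCast_pow_succ hodd ha hu2 k he
  refine ⟨_, tendsto_atTop_of_eventually_const hconst, ?_⟩
  have hm' : (3 : ℝ) ≤ m := by exact_mod_cast hm
  have ht : (p : ℝ) ^ ((2 - (m : ℝ)) / 2) < 1 :=
    Real.rpow_lt_one_of_one_lt_of_neg (by exact_mod_cast hp.one_lt) (by linarith)
  have hprim := one_sub_rpow_le_primSolCount_intCast_div hodd (by omega) ha
    ((p : ℤ) ^ (2 * k) * u) (e := 2 * k + 2) (by omega)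
  have hPN : primSolCount (fun i => (a i : ZMod (p ^ (2 * k + 2))))
      (((p : ℤ) ^ (2 * k) * u : ℤ) : ZMod _) ≤ N (2 * k + 2) := by
    rw [hN _ (by omega)]
    exact Nat.le.intro (solCount_eq_primSolCount_add_imprimSolCount _ _).symm
  exact (one_sub_two_mul_div_one_sub_le ht).trans
    (hprim.trans (div_le_div_of_nonneg_right (by exact_mod_cast hPN) (by positivity)))

/-- Let `p` be an odd prime, `m ≥ 3`, `a₁, …, a_m` integers prime to `p`, `u` a nonzero
squarefree integer, and `k ≥ 0`.  If `N e` denotes the number of solutions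
`x ∈ (ℤ/p^e)^m` of `∑ aᵢ xᵢ² = p^(2k)·u`, then `N e / p^((m-1)e)` converges as
`e → ∞`, and its limit is at least `(1 - 2·p^(1-m/2)) / (1 - p^(1-m/2))`. -/
theorem statement6 (p : ℕ) (hp : p.Prime) (hodd : p ≠ 2)
    (m : ℕ) (hm : 3 ≤ m)
    (a : Fin m → ℤ) (ha : ∀ i, ¬ (p : ℤ) ∣ a i)
    (u : ℤ) (hu : Squarefree u) (hu0 : u ≠ 0) (k : ℕ)
    (N : ℕ → ℕ)
    (hN : ∀ e : ℕ, 1 ≤ e →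
      N e = Nat.card {x : Fin m → ZMod (p ^ e) //
        ∑ i, (a i : ZMod (p ^ e)) * (x i) ^ 2
          = (((p : ℤ) ^ (2 * k) * u : ℤ) : ZMod (p ^ e))}) :
    ∃ L : ℝ,
      Tendsto (fun e : ℕ => (N e : ℝ) / (p : ℝ) ^ ((m - 1) * e)) atTop (nhds L) ∧
      (1 - 2 * (p : ℝ) ^ ((2 - (m : ℝ)) / 2)) / (1 - (p : ℝ) ^ ((2 - (m : ℝ)) / 2))
        ≤ L :=
  statement6_general p hp hodd m hm a ha u hu k N hN
end

section
/- Let m ≥ 1 and let M be a symmetric m×m matrix with rational entries, defining the bilinear form B(x, y) = xᵀ·M·y on ℚ^m and, by extension of scalars, on ℝ^m. Let v, v' ∈ ℚ^m with B(v, v) ≠ 0, let g : ℝ^m → ℝ^m be an ℝ-linear map satisfying B(g x, g y) = B(x, y) for all x, y ∈ ℝ^m, and suppose g(v) = λ • v' for some λ ∈ ℝ (viewing v, v' in ℝ^m via the coordinate inclusion). Then λ is rational if and only if there exists q ∈ ℚ with B(v, v) = q² · B(v', v'). -/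
/-! Applying the isometry to `B(v, v)` gives `B(v, v) = λ² B(v', v')` with both forms rational and
nonzero, so `λ²` is rational, and `λ` is rational exactly when `λ² = B(v, v) / B(v', v')` is the
square of a rational `q`, in which case `λ = ±q`. -/

open Matrix

theorem RingHom.map_dotProduct_mulVec {n R S : Type*} [Fintype n] [CommSemiring R]
    [CommSemiring S] (f : R →+* S) (A : Matrix n n R) (x y : n → R) :
    f (x ⬝ᵥ A *ᵥ y) = (f ∘ x) ⬝ᵥ A.map f *ᵥ (f ∘ y) := by
  rw [f.map_dotProduct]
  congr 1
  ext i
  exact f.map_mulVec A y i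

theorem dotProduct_mulVec_eq_sq_mul_of_map_eq_smul {n R : Type*} [Fintype n] [CommSemiring R]
    {A : Matrix n n R} {g : (n → R) → n → R} (hg : ∀ x y, g x ⬝ᵥ A *ᵥ g y = x ⬝ᵥ A *ᵥ y)
    {x y : n → R} {c : R} (hgx : g x = c • y) :
    x ⬝ᵥ A *ᵥ x = c ^ 2 * (y ⬝ᵥ A *ᵥ y) := by
  rw [← hg, hgx, mulVec_smul, dotProduct_smul, smul_dotProduct, smul_eq_mul, smul_eq_mul,
    ← mul_assoc, sq]

theorem exists_algebraMap_eq_iff_of_algebraMap_eq_sq_mul {K L : Type*} [Field K] [Field L]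
    [Algebra K L] {a b : K} {c : L} (ha : a ≠ 0)
    (h : algebraMap K L a = c ^ 2 * algebraMap K L b) :
    (∃ q : K, algebraMap K L q = c) ↔ ∃ q : K, a = q ^ 2 * b := by
  constructor
  · rintro ⟨q, rfl⟩
    exact ⟨q, (algebraMap K L).injective (by rw [h, map_mul, map_pow])⟩
  · rintro ⟨q, rfl⟩
    have hb : algebraMap K L b ≠ 0 := by
      simpa using right_ne_zero_of_mul ha
    have hsq : c ^ 2 = algebraMap K L q ^ 2 := by
      rw [map_mul, map_pow] at h
      exact (mul_right_cancel₀ hb h).symm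
    rcases sq_eq_sq_iff_eq_or_eq_neg.mp hsq with hc | hc
    · exact ⟨q, hc.symm⟩
    · exact ⟨-q, by rw [map_neg, hc]⟩

theorem statement7_general (m : ℕ)
    (M : Matrix (Fin m) (Fin m) ℚ)
    (v v' : Fin m → ℚ)
    (hv : dotProduct v (M.mulVec v) ≠ 0)
    (g : (Fin m → ℝ) →ₗ[ℝ] (Fin m → ℝ))
    (hg : ∀ x y : Fin m → ℝ,
      dotProduct (g x) ((M.map (fun q : ℚ => (q : ℝ))).mulVec (g y))
        = dotProduct x ((M.map (fun q : ℚ => (q : ℝ))).mulVec y))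
    (lam : ℝ)
    (hgv : g (fun i => (v i : ℝ)) = lam • (fun i => (v' i : ℝ))) :
    (∃ q : ℚ, (q : ℝ) = lam) ↔
      ∃ q : ℚ, dotProduct v (M.mulVec v)
        = q ^ 2 * dotProduct v' (M.mulVec v') := by
  have hform (w : Fin m → ℚ) : ((w ⬝ᵥ M *ᵥ w : ℚ) : ℝ)
      = (fun i => (w i : ℝ)) ⬝ᵥ M.map (fun q : ℚ => (q : ℝ)) *ᵥ (fun i => (w i : ℝ)) :=
    (Rat.castHom ℝ).map_dotProduct_mulVec M w w
  have hscale : ((v ⬝ᵥ M *ᵥ v : ℚ) : ℝ) = lam ^ 2 * ((v' ⬝ᵥ M *ᵥ v' : ℚ) : ℝ) := by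
    rw [hform, hform]
    exact dotProduct_mulVec_eq_sq_mul_of_map_eq_smul hg hgv
  exact exists_algebraMap_eq_iff_of_algebraMap_eq_sq_mul hv hscale

/-- Let `M` be a symmetric rational `m × m` matrix defining the bilinear form
`B(x,y) = xᵀ M y` on `ℚ^m` and on `ℝ^m`.  Let `v, v' ∈ ℚ^m` with `B(v,v) ≠ 0`, let
`g : ℝ^m → ℝ^m` be an `ℝ`-linear map preserving `B`, and suppose `g v = λ • v'`.
Then `λ` is rational iff `B(v,v) = q² · B(v',v')` for some rational `q`. -/
theorem statement7 (m : ℕ) (hm : 1 ≤ m)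
    (M : Matrix (Fin m) (Fin m) ℚ) (hM : M.IsSymm)
    (v v' : Fin m → ℚ)
    (hv : dotProduct v (M.mulVec v) ≠ 0)
    (g : (Fin m → ℝ) →ₗ[ℝ] (Fin m → ℝ))
    (hg : ∀ x y : Fin m → ℝ,
      dotProduct (g x) ((M.map (fun q : ℚ => (q : ℝ))).mulVec (g y))
        = dotProduct x ((M.map (fun q : ℚ => (q : ℝ))).mulVec y))
    (lam : ℝ)
    (hgv : g (fun i => (v i : ℝ)) = lam • (fun i => (v' i : ℝ))) :
    (∃ q : ℚ, (q : ℝ) = lam) ↔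
      ∃ q : ℚ, dotProduct v (M.mulVec v)
        = q ^ 2 * dotProduct v' (M.mulVec v') :=
  statement7_general m M v v' hv g hg lam hgv
end
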